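/- arXiv:2309.15819 — 6 statements merged into one kernel-verified Lean document; each statement's English description precedes it below -/
import Mathlib

section
/- Let n ≥ 1 and f, g ∈ L²(ℝⁿ). Then ⟨f_{(a,b)}, g⟩ → 0 as (a,b) → ∞ in the hyperbolic metric; that is, for every ε > 0 there exists R > 0 such that |⟨f_{(a,b)}, g⟩| < ε whenever d((1,0),(a,b)) ≥ R. -/
open MeasureTheory Metric Set
open scoped ENNReal

noncomputable section

abbrev Euc (n : ℕ) := EuclideanSpace ℝ (Fin n)
abbrev L2 (n : ℕ) := Lp ℂ 2 (volume : Measure (Euc n))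

def lamMeas (n : ℕ) : Measure (ℝ × Euc n) :=
  (((volume : Measure ℝ).restrict (Set.Ioi (0:ℝ))).prod (volume : Measure (Euc n))).withDensity
    (fun p => ENNReal.ofReal (p.1 ^ (-((n : ℝ) + 1))))

def arcosh (x : ℝ) : ℝ := Real.log (x + Real.sqrt (x ^ 2 - 1))

def hypDist {n : ℕ} (p q : ℝ × Euc n) : ℝ :=
  arcosh (1 + (|p.1 - q.1| ^ 2 + ‖p.2 - q.2‖ ^ 2) / (2 * p.1 * q.1))

def basePt (n : ℕ) : ℝ × Euc n := (1, 0)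

def dil {n : ℕ} (ψ : Euc n → ℂ) (p : ℝ × Euc n) : Euc n → ℂ :=
  fun x => (p.1 ^ (-(n : ℝ) / 2) : ℝ) • ψ ((p.1)⁻¹ • (x - p.2))

def dilOne {n : ℕ} (φ : Euc n → ℂ) (p : ℝ × Euc n) : Euc n → ℂ :=
  fun x => (p.1 ^ (-(n : ℝ)) : ℝ) • φ ((p.1)⁻¹ • (x - p.2))

def pairing {n : ℕ} (f g : Euc n → ℂ) : ℂ :=
  ∫ x, f x * (starRingEnd ℂ) (g x)

open scoped Classical in
def toL2 {n : ℕ} (f : Euc n → ℂ) : L2 n :=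
  if h : MemLp f 2 (volume : Measure (Euc n)) then h.toLp f else 0

def IsParsevalFrame {n : ℕ} (ψ : Euc n → ℂ) : Prop :=
  ∀ f : L2 n, ‖f‖ ^ 2 = ∫ p, ‖pairing (⇑f) (dil ψ p)‖ ^ 2 ∂(lamMeas n)

/-- The region of ℝ^{n+1}_+ outside the hyperbolic ball D(q, R). -/
def farFrom {n : ℕ} (q : ℝ × Euc n) (R : ℝ) : Set (ℝ × Euc n) :=
  {p | 0 < p.1 ∧ R ≤ hypDist q p}

/-- The Carleson tent T(B(c,r)). -/
def tent {n : ℕ} (c : Euc n) (r : ℝ) : Set (ℝ × Euc n) :=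
  {p | 0 < p.1 ∧ ‖c - p.2‖ < r - p.1}

/-- The Carleson box function Cμ(x) = sup_{(a,b) ∈ V_x} μ(T(B(b,a)))/|B(b,a)|, valued in [0,∞]. -/
def carlesonSup {n : ℕ} (μ : Measure (ℝ × Euc n)) (x : Euc n) : ℝ≥0∞ :=
  ⨆ (p : ℝ × Euc n) (_ : 0 < p.1 ∧ ‖x - p.2‖ < p.1),
    μ (tent p.2 p.1) / (volume : Measure (Euc n)) (Metric.ball p.2 p.1)

/-- μ is a Carleson measure on ℝ^{n+1}_+. -/
def IsCarleson {n : ℕ} (μ : Measure (ℝ × Euc n)) : Prop :=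
  ∃ C : ℝ≥0∞, C ≠ ⊤ ∧ ∀ p : ℝ × Euc n, 0 < p.1 →
    μ (tent p.2 p.1) ≤ C * (volume : Measure (Euc n)) (Metric.ball p.2 p.1)

/-- μ is a vanishing Carleson measure on ℝ^{n+1}_+. -/
def IsVanishingCarleson {n : ℕ} (μ : Measure (ℝ × Euc n)) : Prop :=
  IsCarleson μ ∧
  ∀ ε : ℝ, 0 < ε → ∃ R : ℝ, ∀ p ∈ farFrom (basePt n) R,
    μ (tent p.2 p.1) ≤ ENNReal.ofReal ε * (volume : Measure (Euc n)) (Metric.ball p.2 p.1)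

/-- A bounded subset of C_c^∞(ℝⁿ): uniformly compactly supported smooth functions with
all derivatives uniformly bounded. -/
def IsBoundedSmoothFamily {n : ℕ} (B : Set (Euc n → ℂ)) : Prop :=
  (∀ g ∈ B, ContDiff ℝ (⊤ : ℕ∞) g) ∧
  (∃ R : ℝ, ∀ g ∈ B, tsupport g ⊆ Metric.closedBall 0 R) ∧
  (∀ k : ℕ, ∃ M : ℝ, ∀ g ∈ B, ∀ x, ‖iteratedFDeriv ℝ k g x‖ ≤ M)

/-- T is weakly compact: for every bounded set 𝓑 ⊆ C_c^∞ and f ∈ 𝓑,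
lim_{(a,b)→∞} sup_{g ∈ 𝓑} |⟨T f_{(a,b)}, g_{(a,b)}⟩| = 0. -/
def WeaklyCompact {n : ℕ} (T : L2 n →L[ℂ] L2 n) : Prop :=
  ∀ B : Set (Euc n → ℂ), IsBoundedSmoothFamily B → ∀ f ∈ B,
    ∀ ε : ℝ, 0 < ε → ∃ R : ℝ, ∀ p ∈ farFrom (basePt n) R, ∀ g ∈ B,
      ‖pairing (⇑(T (toL2 (dil f p)))) (dil g p)‖ < ε

/-- The Schur-type bound: sup_{(a',b')} w(a',b')⁻¹ ∫ |⟨Sψ_{(a',b')}, ψ_{(a,b)}⟩| w(a,b) dλ < ∞. -/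
def SchurBound {n : ℕ} (ψ : Euc n → ℂ) (S : L2 n →L[ℂ] L2 n) (w : ℝ × Euc n → ℝ) : Prop :=
  ∃ C : ℝ, ∀ p' : ℝ × Euc n, 0 < p'.1 →
    (∫⁻ p, ENNReal.ofReal (‖pairing (⇑(S (toL2 (dil ψ p')))) (dil ψ p)‖ * w p) ∂(lamMeas n))
      ≤ ENNReal.ofReal (C * w p')

/-- The localization decay: lim_{R→∞} sup_{(a',b')} w(a',b')⁻¹
∫_{D((a',b'),R)^c} |⟨Sψ_{(a',b')}, ψ_{(a,b)}⟩| w(a,b) dλ = 0. -/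
def LocDecay {n : ℕ} (ψ : Euc n → ℂ) (S : L2 n →L[ℂ] L2 n) (w : ℝ × Euc n → ℝ) : Prop :=
  ∀ ε : ℝ, 0 < ε → ∃ R : ℝ, ∀ p' : ℝ × Euc n, 0 < p'.1 →
    (∫⁻ p in farFrom p' R,
        ENNReal.ofReal (‖pairing (⇑(S (toL2 (dil ψ p')))) (dil ψ p)‖ * w p) ∂(lamMeas n))
      ≤ ENNReal.ofReal (ε * w p')

/-- T is localized with respect to {ψ_{(a,b)}} with weight w. -/
def Localized {n : ℕ} (ψ : Euc n → ℂ) (T : L2 n →L[ℂ] L2 n) (w : ℝ × Euc n → ℝ) : Prop :=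
  SchurBound ψ T w ∧ SchurBound ψ (ContinuousLinearMap.adjoint T) w ∧
  LocDecay ψ T w ∧ LocDecay ψ (ContinuousLinearMap.adjoint T) w

/-- The piecewise bound function G of Lemma 4.1. -/
def Gfun (n : ℕ) (δ : ℝ) (p : ℝ × Euc n) : ℝ :=
  if 1 ≤ p.1 then
    (if ‖p.2‖ ≤ p.1 then p.1 ^ (-((n : ℝ) / 2 + δ))
     else p.1 ^ ((n : ℝ) / 2) * ‖p.2‖ ^ (-((n : ℝ) + δ)))
  else
    (if ‖p.2‖ ≤ 1 then p.1 ^ ((n : ℝ) / 2 + δ)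
     else p.1 ^ ((n : ℝ) / 2 + δ) * ‖p.2‖ ^ (-((n : ℝ) + δ)))

/-- Calderón–Zygmund kernel with constants C_K and δ. -/
def IsCZKernel (n : ℕ) (K : Euc n → Euc n → ℂ) (CK δ : ℝ) : Prop :=
  (∀ x y : Euc n, x ≠ y → ‖K x y‖ ≤ CK * ‖x - y‖ ^ (-(n : ℝ))) ∧
  (∀ x y y' : Euc n, y ≠ y' → ‖y - y'‖ ≤ ‖x - y‖ / 2 →
    ‖K x y - K x y'‖ ≤ CK * ‖y - y'‖ ^ δ * ‖x - y‖ ^ (-((n : ℝ) + δ))) ∧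
  (∀ x y y' : Euc n, y ≠ y' → ‖y - y'‖ ≤ ‖x - y‖ / 2 →
    ‖K y x - K y' x‖ ≤ CK * ‖y - y'‖ ^ δ * ‖x - y‖ ^ (-((n : ℝ) + δ)))


section Statement6Aux

open MeasureTheory Real

namespace Stmt6

variable {n : ℕ}

private lemma finrank_euc (n : ℕ) : Module.finrank ℝ (Euc n) = n := by
  simp [finrank_euclideanSpace]

private lemma lint_smul {a : ℝ} (ha : 0 < a) (F : Euc n → ℝ≥0∞) :
    ∫⁻ x, F (a⁻¹ • x) = ENNReal.ofReal (a ^ n) * ∫⁻ x, F x := by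
  have ha' : a⁻¹ ≠ 0 := inv_ne_zero ha.ne'
  set u : ℝˣ := (isUnit_iff_ne_zero.2 ha').unit with hu
  let e : Euc n ≃ᵐ Euc n := (Homeomorph.smul u).toMeasurableEquiv
  have he : ⇑e = fun x : Euc n => a⁻¹ • x := by
    funext x
    simp [e, Units.smul_def, hu]
  have h1 : ∫⁻ x, F x ∂(Measure.map e (volume : Measure (Euc n)))
      = ∫⁻ x, F (e x) ∂(volume : Measure (Euc n)) := lintegral_map_equiv F e
  have hmap : Measure.map (⇑e) (volume : Measure (Euc n))
      = ENNReal.ofReal (a ^ n) • (volume : Measure (Euc n)) := by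
    rw [he]
    have := MeasureTheory.Measure.map_addHaar_smul (volume : Measure (Euc n)) ha'
    rw [show ((a⁻¹ • ·) : Euc n → Euc n) = fun x : Euc n => a⁻¹ • x from rfl] at this
    rw [this, finrank_euc]
    congr 1
    rw [inv_pow, inv_inv, abs_of_nonneg (pow_nonneg ha.le _)]
  rw [he] at h1 hmap
  rw [← h1, hmap, lintegral_smul_measure, smul_eq_mul]

private lemma lint_cov {a : ℝ} (ha : 0 < a) (b : Euc n) (F : Euc n → ℝ≥0∞) :
    ∫⁻ x, F (a⁻¹ • (x - b)) = ENNReal.ofReal (a ^ n) * ∫⁻ x, F x := by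
  have h1 : ∫⁻ x, F (a⁻¹ • (x - b)) = ∫⁻ x, F (a⁻¹ • x) :=
    lintegral_sub_right_eq_self (fun y => F (a⁻¹ • y)) b
  rw [h1, lint_smul ha]

private lemma int_cov {a : ℝ} (ha : 0 < a) (b : Euc n) (F : Euc n → ℝ) :
    ∫ x, F (a⁻¹ • (x - b)) = (a ^ n) • ∫ x, F x := by
  have h1 : ∫ x, F (a⁻¹ • (x - b)) = ∫ x, F (a⁻¹ • x) :=
    integral_sub_right_eq_self (fun y => F (a⁻¹ • y)) b
  rw [h1]
  have := MeasureTheory.Measure.integral_comp_inv_smul_of_nonneg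
    (volume : Measure (Euc n)) F ha.le
  rw [this, finrank_euc]

private lemma sm_dil {u : Euc n → ℂ} (hu : StronglyMeasurable u) (p : ℝ × Euc n) :
    StronglyMeasurable (dil u p) := by
  have hm : Measurable fun x : Euc n => (p.1)⁻¹ • (x - p.2) :=
    by fun_prop
  exact (hu.comp_measurable hm).const_smul (p.1 ^ (-(n : ℝ) / 2) : ℝ)

private lemma eLpNorm_dil (u : Euc n → ℂ) {p : ℝ × Euc n} (hp : 0 < p.1) :
    eLpNorm (dil u p) 2 volume = eLpNorm u 2 volume := by
  obtain ⟨a, b⟩ := p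
  simp only at hp
  rw [eLpNorm_eq_lintegral_rpow_enorm_toReal two_ne_zero ENNReal.ofNat_ne_top,
      eLpNorm_eq_lintegral_rpow_enorm_toReal two_ne_zero ENNReal.ofNat_ne_top]
  simp only [ENNReal.toReal_ofNat, enorm_eq_nnnorm]
  congr 1
  have hc : (0:ℝ) < a ^ (-(n : ℝ) / 2) := Real.rpow_pos_of_pos hp _
  have hstep : ∀ x : Euc n,
      (‖dil u (a, b) x‖₊ : ℝ≥0∞) ^ (2:ℝ)
        = ENNReal.ofReal (a ^ (-(n:ℝ))) *
          ((‖u (a⁻¹ • (x - b))‖₊ : ℝ≥0∞) ^ (2:ℝ)) := by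
    intro x
    have : dil u (a, b) x = (a ^ (-(n : ℝ) / 2) : ℝ) • u (a⁻¹ • (x - b)) := rfl
    rw [this, nnnorm_smul, ENNReal.coe_mul,
      ENNReal.mul_rpow_of_nonneg _ _ (by simp : (0:ℝ) ≤ (2:ℝ))]
    congr 1
    rw [show ((‖(a ^ (-(n : ℝ) / 2) : ℝ)‖₊ : ℝ≥0∞)) = ENNReal.ofReal (a ^ (-(n : ℝ) / 2)) by
      simp [← enorm_eq_nnnorm, ← ofReal_norm_eq_enorm, Real.norm_of_nonneg hc.le]]
    rw [ENNReal.ofReal_rpow_of_pos hc]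
    congr 1
    rw [← Real.rpow_mul hp.le]
    norm_num
  calc ∫⁻ x, (‖dil u (a, b) x‖₊ : ℝ≥0∞) ^ (2:ℝ)
      = ∫⁻ x, ENNReal.ofReal (a ^ (-(n:ℝ))) *
          ((‖u (a⁻¹ • (x - b))‖₊ : ℝ≥0∞) ^ (2:ℝ)) := by
        simp only [hstep]
    _ = ENNReal.ofReal (a ^ (-(n:ℝ))) *
          ∫⁻ x, ((‖u (a⁻¹ • (x - b))‖₊ : ℝ≥0∞) ^ (2:ℝ)) :=
        lintegral_const_mul' _ _ ENNReal.ofReal_ne_top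
    _ = ENNReal.ofReal (a ^ (-(n:ℝ))) * (ENNReal.ofReal (a ^ n) *
          ∫⁻ x, ((‖u x‖₊ : ℝ≥0∞) ^ (2:ℝ))) := by
        rw [lint_cov hp b (fun y => ((‖u y‖₊ : ℝ≥0∞) ^ (2:ℝ)))]
    _ = ∫⁻ x, ((‖u x‖₊ : ℝ≥0∞) ^ (2:ℝ)) := by
        rw [← mul_assoc, ← ENNReal.ofReal_mul (Real.rpow_nonneg hp.le _)]
        rw [← Real.rpow_natCast a n, ← Real.rpow_add hp]
        norm_num

private lemma memLp_dil {u : Euc n → ℂ} (hsm : StronglyMeasurable u)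
    (hu : MemLp u 2 (volume : Measure (Euc n))) {p : ℝ × Euc n} (hp : 0 < p.1) :
    MemLp (dil u p) 2 (volume : Measure (Euc n)) :=
  ⟨(sm_dil hsm p).aestronglyMeasurable, by rw [eLpNorm_dil u hp]; exact hu.2⟩
private lemma pairing_norm_le {u v : Euc n → ℂ} (hu : MemLp u 2 (volume : Measure (Euc n)))
    (hv : MemLp v 2 (volume : Measure (Euc n))) :
    ‖pairing u v‖ ≤ (eLpNorm u 2 (volume : Measure (Euc n))).toReal *
      (eLpNorm v 2 (volume : Measure (Euc n))).toReal := by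
  have h : pairing u v = inner (𝕜 := ℂ) (hv.toLp v) (hu.toLp u) := by
    rw [MeasureTheory.L2.inner_def]
    refine integral_congr_ae ?_
    filter_upwards [hu.coeFn_toLp, hv.coeFn_toLp] with x hx hy
    simp [RCLike.inner_apply, hx, hy, mul_comm]
  rw [h]
  calc ‖inner (𝕜 := ℂ) (hv.toLp v) (hu.toLp u)‖ ≤ ‖hv.toLp v‖ * ‖hu.toLp u‖ :=
        norm_inner_le_norm _ _
    _ = _ := by rw [Lp.norm_toLp, Lp.norm_toLp]; ring

private lemma integrable_pair {u v : Euc n → ℂ} (hu : MemLp u 2 (volume : Measure (Euc n)))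
    (hv : MemLp v 2 (volume : Measure (Euc n))) :
    Integrable (fun x => u x * (starRingEnd ℂ) (v x)) (volume : Measure (Euc n)) := by
  have hv2 : MemLp (fun x => (starRingEnd ℂ) (v x)) 2 (volume : Measure (Euc n)) := by
    refine ⟨(RCLike.continuous_conj.comp_aestronglyMeasurable hv.1), ?_⟩
    have : eLpNorm (fun x => (starRingEnd ℂ) (v x)) 2 (volume : Measure (Euc n))
        = eLpNorm v 2 (volume : Measure (Euc n)) :=
      eLpNorm_congr_norm_ae (Filter.Eventually.of_forall fun x => by simp)
    rw [this]; exact hv.2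
  have h211 : (1:ℝ≥0∞)/1 = 1/2 + 1/2 := by
    rw [ENNReal.add_halves]; simp
  have := hv2.smul (φ := u) (r := 1) hu
  rw [memLp_one_iff_integrable] at this
  exact this

private lemma pairing_sub_left {u u' v : Euc n → ℂ}
    (hu : MemLp u 2 (volume : Measure (Euc n))) (hu' : MemLp u' 2 (volume : Measure (Euc n)))
    (hv : MemLp v 2 (volume : Measure (Euc n))) :
    pairing (fun x => u x - u' x) v = pairing u v - pairing u' v := by
  unfold pairing
  rw [← integral_sub (integrable_pair hu hv) (integrable_pair hu' hv)]
  congr 1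
  funext x
  ring

private lemma pairing_sub_right {u v v' : Euc n → ℂ}
    (hu : MemLp u 2 (volume : Measure (Euc n))) (hv : MemLp v 2 (volume : Measure (Euc n)))
    (hv' : MemLp v' 2 (volume : Measure (Euc n))) :
    pairing u (fun x => v x - v' x) = pairing u v - pairing u v' := by
  unfold pairing
  rw [← integral_sub (integrable_pair hu hv) (integrable_pair hu hv')]
  congr 1
  funext x
  rw [map_sub]
  ring
private lemma dil_cont {u : Euc n → ℂ} (hu : Continuous u) (p : ℝ × Euc n) :
    Continuous (dil u p) :=
  by unfold dil; fun_prop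

private lemma dil_hcs {u : Euc n → ℂ} (hu : HasCompactSupport u) {p : ℝ × Euc n}
    (hp : 0 < p.1) : HasCompactSupport (dil u p) := by
  have himg : IsCompact ((fun y : Euc n => p.2 + p.1 • y) '' tsupport u) :=
    (hu.isCompact).image (continuous_const.add ((continuous_id : Continuous (id : Euc n → Euc n)).const_smul p.1))
  refine HasCompactSupport.of_support_subset_isCompact himg ?_
  intro x hx
  have hx' : u ((p.1)⁻¹ • (x - p.2)) ≠ 0 := by
    intro h0
    apply hx
    show (p.1 ^ (-(n : ℝ) / 2) : ℝ) • u ((p.1)⁻¹ • (x - p.2)) = 0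
    rw [h0, smul_zero]
  refine ⟨(p.1)⁻¹ • (x - p.2), subset_tsupport u hx', ?_⟩
  show p.2 + p.1 • ((p.1)⁻¹ • (x - p.2)) = x
  rw [smul_inv_smul₀ hp.ne']
  abel

private lemma dil_integrable {u : Euc n → ℂ} (hc : Continuous u) (hu : HasCompactSupport u)
    {p : ℝ × Euc n} (hp : 0 < p.1) : Integrable (dil u p) (volume : Measure (Euc n)) :=
  (dil_cont hc p).integrable_of_hasCompactSupport (dil_hcs hu hp)

private lemma norm_dil_eq {u : Euc n → ℂ} {p : ℝ × Euc n} (hp : 0 < p.1) (x : Euc n) :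
    ‖dil u p x‖ = p.1 ^ (-(n : ℝ) / 2) * ‖u ((p.1)⁻¹ • (x - p.2))‖ := by
  show ‖(p.1 ^ (-(n : ℝ) / 2) : ℝ) • u ((p.1)⁻¹ • (x - p.2))‖ = _
  rw [norm_smul, Real.norm_of_nonneg (Real.rpow_pos_of_pos hp _).le]

private lemma int_norm_dil {u : Euc n → ℂ} {p : ℝ × Euc n} (hp : 0 < p.1) :
    ∫ x, ‖dil u p x‖ = p.1 ^ ((n : ℝ) / 2) * ∫ x, ‖u x‖ := by
  have h1 : ∀ x, ‖dil u p x‖ = p.1 ^ (-(n : ℝ) / 2) * ‖u ((p.1)⁻¹ • (x - p.2))‖ :=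
    norm_dil_eq hp
  calc ∫ x, ‖dil u p x‖ = ∫ x, p.1 ^ (-(n : ℝ) / 2) * ‖u ((p.1)⁻¹ • (x - p.2))‖ := by
        simp only [h1]
    _ = p.1 ^ (-(n : ℝ) / 2) * ∫ x, ‖u ((p.1)⁻¹ • (x - p.2))‖ := integral_const_mul _ _
    _ = p.1 ^ (-(n : ℝ) / 2) * ((p.1 ^ n) • ∫ x, ‖u x‖) := by
        rw [int_cov hp p.2 (fun y => ‖u y‖)]
    _ = p.1 ^ ((n : ℝ) / 2) * ∫ x, ‖u x‖ := by
        rw [smul_eq_mul, ← mul_assoc]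
        congr 1
        rw [← Real.rpow_natCast p.1 n, ← Real.rpow_add hp]
        congr 1
        ring
private lemma bound_large {f₀ g₀ : Euc n → ℂ} (hg₀ : Integrable g₀ (volume : Measure (Euc n)))
    {Mf : ℝ} (hMf : ∀ x, ‖f₀ x‖ ≤ Mf) {p : ℝ × Euc n} (hp : 0 < p.1) :
    ‖pairing (dil f₀ p) g₀‖ ≤ p.1 ^ (-(n:ℝ)/2) * Mf * ∫ x, ‖g₀ x‖ := by
  calc ‖pairing (dil f₀ p) g₀‖ ≤ ∫ x, ‖dil f₀ p x * (starRingEnd ℂ) (g₀ x)‖ :=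
        norm_integral_le_integral_norm _
    _ ≤ ∫ x, (p.1 ^ (-(n:ℝ)/2) * Mf) * ‖g₀ x‖ := by
        refine integral_mono_of_nonneg (Filter.Eventually.of_forall fun x => norm_nonneg _)
          ((hg₀.norm.const_mul _)) (Filter.Eventually.of_forall fun x => ?_)
        dsimp only
        rw [norm_mul, RCLike.norm_conj, norm_dil_eq hp]
        have h1 : ‖f₀ ((p.1)⁻¹ • (x - p.2))‖ ≤ Mf := hMf _
        have h2 : (0:ℝ) ≤ p.1 ^ (-(n:ℝ)/2) := (Real.rpow_pos_of_pos hp _).le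
        exact mul_le_mul_of_nonneg_right (mul_le_mul_of_nonneg_left h1 h2) (norm_nonneg _)
    _ = p.1 ^ (-(n:ℝ)/2) * Mf * ∫ x, ‖g₀ x‖ := integral_const_mul _ _

private lemma bound_small {f₀ g₀ : Euc n → ℂ} (hfc : Continuous f₀)
    (hfs : HasCompactSupport f₀)
    {Mg : ℝ} (hMg : ∀ x, ‖g₀ x‖ ≤ Mg) {p : ℝ × Euc n} (hp : 0 < p.1) :
    ‖pairing (dil f₀ p) g₀‖ ≤ p.1 ^ ((n:ℝ)/2) * (∫ x, ‖f₀ x‖) * Mg := by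
  calc ‖pairing (dil f₀ p) g₀‖ ≤ ∫ x, ‖dil f₀ p x * (starRingEnd ℂ) (g₀ x)‖ :=
        norm_integral_le_integral_norm _
    _ ≤ ∫ x, ‖dil f₀ p x‖ * Mg := by
        refine integral_mono_of_nonneg (Filter.Eventually.of_forall fun x => norm_nonneg _)
          (((dil_integrable hfc hfs hp).norm.mul_const _))
          (Filter.Eventually.of_forall fun x => ?_)
        dsimp only
        rw [norm_mul, RCLike.norm_conj]
        exact mul_le_mul_of_nonneg_left (hMg x) (norm_nonneg _)
    _ = (∫ x, ‖dil f₀ p x‖) * Mg := integral_mul_const _ _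
    _ = p.1 ^ ((n:ℝ)/2) * (∫ x, ‖f₀ x‖) * Mg := by rw [int_norm_dil hp]

private lemma pairing_vanish {f₀ g₀ : Euc n → ℂ} {rf rg a₁ : ℝ}
    (hrf : ∀ x, f₀ x ≠ 0 → ‖x‖ ≤ rf) (hrg : ∀ x, g₀ x ≠ 0 → ‖x‖ ≤ rg)
    {p : ℝ × Euc n} (hp : 0 < p.1) (hpa : p.1 ≤ a₁) (hrf0 : 0 ≤ rf)
    (hb : a₁ * rf + rg < ‖p.2‖) :
    pairing (dil f₀ p) g₀ = 0 := by
  unfold pairing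
  rw [show (fun x => dil f₀ p x * (starRingEnd ℂ) (g₀ x)) = fun _ => (0:ℂ) from ?_,
    integral_zero]
  funext x
  by_cases hg : g₀ x = 0
  · rw [hg]; simp
  · have hgx : ‖x‖ ≤ rg := hrg x hg
    by_cases hf : f₀ ((p.1)⁻¹ • (x - p.2)) = 0
    · show (p.1 ^ (-(n : ℝ) / 2) : ℝ) • f₀ ((p.1)⁻¹ • (x - p.2)) * _ = 0
      rw [hf, smul_zero, zero_mul]
    · exfalso
      have h1 : ‖(p.1)⁻¹ • (x - p.2)‖ ≤ rf := hrf _ hf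
      rw [norm_smul, Real.norm_of_nonneg (inv_nonneg.2 hp.le)] at h1
      have h2 : ‖x - p.2‖ ≤ p.1 * rf := by
        calc ‖x - p.2‖ = p.1 * ((p.1)⁻¹ * ‖x - p.2‖) := by field_simp
          _ ≤ p.1 * rf := mul_le_mul_of_nonneg_left h1 hp.le
      have h3 : ‖p.2‖ ≤ ‖x - p.2‖ + ‖x‖ := by
        have he : p.2 = x - (x - p.2) := by abel
        calc ‖p.2‖ = ‖x - (x - p.2)‖ := by rw [← he]
          _ ≤ ‖x‖ + ‖x - p.2‖ := norm_sub_le _ _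
          _ = ‖x - p.2‖ + ‖x‖ := by ring
      have h4 : p.1 * rf ≤ a₁ * rf := mul_le_mul_of_nonneg_right hpa hrf0
      linarith

private lemma regime {a₀ a₁ B : ℝ} (ha₀ : 0 < a₀) (ha₁ : 1 ≤ a₁) (hB : 0 ≤ B)
    {p : ℝ × Euc n} (hp0 : 0 < p.1)
    (hM : ((a₁+1)^2 + B^2)/(2*a₀) + 1 ≤ ((1 - p.1)^2 + ‖p.2‖^2) / (2 * p.1)) :
    p.1 < a₀ ∨ a₁ < p.1 ∨ B < ‖p.2‖ := by
  by_contra hcon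
  push_neg at hcon
  obtain ⟨h1, h2, h3⟩ := hcon
  have hnum : (1 - p.1)^2 + ‖p.2‖^2 ≤ (a₁+1)^2 + B^2 := by
    have e1 : (1 - p.1)^2 ≤ (a₁+1)^2 := by nlinarith
    have e2 : ‖p.2‖^2 ≤ B^2 := by nlinarith [norm_nonneg p.2]
    linarith
  have hq : ((1 - p.1)^2 + ‖p.2‖^2) / (2 * p.1) ≤ ((a₁+1)^2 + B^2)/(2*a₀) :=
    div_le_div₀ (by positivity) hnum (by linarith) (by linarith)
  linarith

private lemma far_imp (M : ℝ) (hM : 0 ≤ M) {p : ℝ × Euc n}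
    (hp : p ∈ farFrom (basePt n) (Real.log (2 * (M + 1)))) :
    M ≤ ((1 - p.1)^2 + ‖p.2‖^2) / (2 * p.1) := by
  obtain ⟨hp0, hpR⟩ := hp
  set s := ((1 - p.1)^2 + ‖p.2‖^2) / (2 * p.1) with hs
  have hs0 : 0 ≤ s := div_nonneg (by positivity) (by positivity)
  have hX : hypDist (basePt n) p = _root_.arcosh (1 + s) := by
    unfold hypDist basePt
    congr 2
    rw [hs]
    have e1 : |(1:ℝ) - p.1| ^ 2 = (1 - p.1)^2 := sq_abs _
    have e2 : ‖(0 : Euc n) - p.2‖ = ‖p.2‖ := by rw [zero_sub, norm_neg]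
    rw [e1, e2]
    ring
  set X := 1 + s with hXdef
  have hX1 : (1:ℝ) ≤ X := le_add_of_nonneg_right hs0
  have h2 : Real.exp (Real.log (2*(M+1))) ≤ Real.exp (hypDist (basePt n) p) :=
    Real.exp_le_exp.mpr hpR
  rw [Real.exp_log (by positivity), hX] at h2
  have h3 : Real.exp (_root_.arcosh X) = X + Real.sqrt (X^2 - 1) := by
    unfold _root_.arcosh
    rw [Real.exp_log]
    have := Real.sqrt_nonneg (X^2 - 1)
    linarith
  have h4 : Real.sqrt (X^2 - 1) ≤ X := by
    calc Real.sqrt (X^2 - 1) ≤ Real.sqrt (X^2) := Real.sqrt_le_sqrt (by nlinarith)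
      _ = X := Real.sqrt_sq (by linarith)
  rw [h3] at h2
  have : M ≤ s := by nlinarith
  exact this

private lemma rpow_large_le {a τ : ℝ} (hτ : 0 < τ) (hn : 1 ≤ n)
    (ha : max 1 ((1/τ)^2) ≤ a) : a ^ (-(n:ℝ)/2) ≤ τ := by
  have ha1 : (1:ℝ) ≤ a := le_trans (le_max_left _ _) ha
  have ha0 : (0:ℝ) < a := lt_of_lt_of_le one_pos ha1
  have hcast : (1:ℝ) ≤ (n:ℝ) := by exact_mod_cast hn
  have h1 : a ^ (-(n:ℝ)/2) ≤ a ^ (-(1:ℝ)/2) :=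
    Real.rpow_le_rpow_of_exponent_le ha1 (by linarith)
  have h2 : (1/τ)^2 ≤ a := le_trans (le_max_right _ _) ha
  have h3 : (1/τ) ≤ a ^ ((1:ℝ)/2) := by
    have hh := Real.rpow_le_rpow (by positivity) h2 (by norm_num : (0:ℝ) ≤ 1/2)
    calc (1/τ) = ((1/τ)^2) ^ ((1:ℝ)/2) := by
          rw [← Real.rpow_natCast (1/τ) 2, ← Real.rpow_mul (by positivity)]
          norm_num
      _ ≤ a ^ ((1:ℝ)/2) := hh
  have h4 : a ^ (-(1:ℝ)/2) = (a ^ ((1:ℝ)/2))⁻¹ := by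
    rw [← Real.rpow_neg ha0.le]
    norm_num
  calc a ^ (-(n:ℝ)/2) ≤ a ^ (-(1:ℝ)/2) := h1
    _ = (a ^ ((1:ℝ)/2))⁻¹ := h4
    _ ≤ (1/τ)⁻¹ := inv_anti₀ (by positivity) h3
    _ = τ := by field_simp

private lemma rpow_small_le {a τ : ℝ} (hτ : 0 < τ) (hn : 1 ≤ n) (ha0 : 0 < a)
    (ha : a ≤ min 1 (τ^2)) : a ^ ((n:ℝ)/2) ≤ τ := by
  have ha1 : a ≤ 1 := le_trans ha (min_le_left _ _)
  have hcast : (1:ℝ) ≤ (n:ℝ) := by exact_mod_cast hn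
  have h1 : a ^ ((n:ℝ)/2) ≤ a ^ ((1:ℝ)/2) :=
    Real.rpow_le_rpow_of_exponent_ge ha0 ha1 (by linarith)
  have h2 : a ≤ τ^2 := le_trans ha (min_le_right _ _)
  have h3 : a ^ ((1:ℝ)/2) ≤ (τ^2) ^ ((1:ℝ)/2) := Real.rpow_le_rpow ha0.le h2 (by norm_num)
  have h4 : ((τ^2:ℝ)) ^ ((1:ℝ)/2) = τ := by
    rw [← Real.rpow_natCast τ 2, ← Real.rpow_mul hτ.le]
    norm_num
  linarith
end Stmt6

end Statement6Aux
set_option maxHeartbeats 2000000 in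
/-- for f, g ∈ L²(ℝⁿ), ⟨f_{(a,b)}, g⟩ → 0 as (a,b) → ∞ in the hyperbolic
metric. -/
theorem statement6 (n : ℕ) (hn : 1 ≤ n) (f g : L2 n) :
    ∀ ε : ℝ, 0 < ε → ∃ R : ℝ, ∀ p ∈ farFrom (basePt n) R,
      ‖pairing (dil (⇑f) p) (⇑g)‖ < ε := by
  classical
  intro ε hε
  set f' : Euc n → ℂ := ⇑f with hf'def
  set g' : Euc n → ℂ := ⇑g with hg'def
  have hf' : MemLp f' 2 (volume : Measure (Euc n)) := Lp.memLp f
  have hg' : MemLp g' 2 (volume : Measure (Euc n)) := Lp.memLp g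
  have hf'sm : StronglyMeasurable f' := Lp.stronglyMeasurable f
  have hg'sm : StronglyMeasurable g' := Lp.stronglyMeasurable g
  set Nf := (eLpNorm f' 2 (volume : Measure (Euc n))).toReal with hNfdef
  set Ng := (eLpNorm g' 2 (volume : Measure (Euc n))).toReal with hNgdef
  have hNf : 0 ≤ Nf := ENNReal.toReal_nonneg
  have hNg : 0 ≤ Ng := ENNReal.toReal_nonneg
  set δ := min 1 (ε/(4*(Nf+Ng+2))) with hδdef
  have hδ : 0 < δ := lt_min one_pos (by positivity)
  have hδ1 : δ ≤ 1 := min_le_left _ _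
  have hδne : (ENNReal.ofReal δ) ≠ 0 := (ENNReal.ofReal_pos.mpr hδ).ne'
  obtain ⟨f₀, hf₀s, hf₀close, hf₀c, hf₀m⟩ :=
    hf'.exists_hasCompactSupport_eLpNorm_sub_le (by norm_num : (2:ℝ≥0∞) ≠ ∞) hδne
  obtain ⟨g₀, hg₀s, hg₀close, hg₀c, hg₀m⟩ :=
    hg'.exists_hasCompactSupport_eLpNorm_sub_le (by norm_num : (2:ℝ≥0∞) ≠ ∞) hδne
  have hf₀sm : StronglyMeasurable f₀ := hf₀c.stronglyMeasurable
  have hg₀sm : StronglyMeasurable g₀ := hg₀c.stronglyMeasurable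
  -- support radii
  obtain ⟨rf', hrf'⟩ := (hf₀s.isBounded).subset_closedBall (0 : Euc n)
  obtain ⟨rg', hrg'⟩ := (hg₀s.isBounded).subset_closedBall (0 : Euc n)
  set rf := max rf' 0 with hrfdef
  set rg := max rg' 0 with hrgdef
  have hrf0 : 0 ≤ rf := le_max_right _ _
  have hrg0 : 0 ≤ rg := le_max_right _ _
  have hrf : ∀ x, f₀ x ≠ 0 → ‖x‖ ≤ rf := by
    intro x hx
    have hx1 : x ∈ Metric.closedBall (0 : Euc n) rf' := hrf' (subset_tsupport f₀ hx)
    rw [Metric.mem_closedBall, dist_zero_right] at hx1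
    exact le_trans hx1 (le_max_left _ _)
  have hrg : ∀ x, g₀ x ≠ 0 → ‖x‖ ≤ rg := by
    intro x hx
    have hx1 : x ∈ Metric.closedBall (0 : Euc n) rg' := hrg' (subset_tsupport g₀ hx)
    rw [Metric.mem_closedBall, dist_zero_right] at hx1
    exact le_trans hx1 (le_max_left _ _)
  -- sup bounds
  obtain ⟨Mf', hMf'⟩ := hf₀c.bounded_above_of_compact_support hf₀s
  obtain ⟨Mg', hMg'⟩ := hg₀c.bounded_above_of_compact_support hg₀s
  set Mf := max Mf' 0 with hMfdef
  set Mg := max Mg' 0 with hMgdef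
  have hMf : ∀ x, ‖f₀ x‖ ≤ Mf := fun x => le_trans (hMf' x) (le_max_left _ _)
  have hMg : ∀ x, ‖g₀ x‖ ≤ Mg := fun x => le_trans (hMg' x) (le_max_left _ _)
  have hMf0 : 0 ≤ Mf := le_max_right _ _
  have hMg0 : 0 ≤ Mg := le_max_right _ _
  -- L¹ norms
  set If := ∫ x, ‖f₀ x‖ with hIfdef
  set Ig := ∫ x, ‖g₀ x‖ with hIgdef
  have hIf0 : 0 ≤ If := integral_nonneg fun x => norm_nonneg _
  have hIg0 : 0 ≤ Ig := integral_nonneg fun x => norm_nonneg _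
  -- scales
  set τ := (ε/4)/(Mf*Ig + If*Mg + 1) with hτdef
  have hτ : 0 < τ := by positivity
  set a₁ := max 1 ((1/τ)^2) with ha₁def
  set a₀ := min 1 (τ^2) with ha₀def
  have ha₀pos : 0 < a₀ := lt_min one_pos (by positivity)
  have ha₁1 : (1:ℝ) ≤ a₁ := le_max_left _ _
  set B := a₁ * rf + rg with hBdef
  have hB0 : 0 ≤ B := by positivity
  set M := ((a₁+1)^2 + B^2)/(2*a₀) + 1 with hMdef
  have hM0 : 0 ≤ M := by positivity
  refine ⟨Real.log (2*(M+1)), fun p hp => ?_⟩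
  have hp0 : 0 < p.1 := hp.1
  have hs : M ≤ ((1 - p.1)^2 + ‖p.2‖^2) / (2 * p.1) := Stmt6.far_imp M hM0 hp
  -- memLp facts for dilations
  have hdf' : MemLp (dil f' p) 2 (volume : Measure (Euc n)) := Stmt6.memLp_dil hf'sm hf' hp0
  have hdf₀ : MemLp (dil f₀ p) 2 (volume : Measure (Euc n)) := Stmt6.memLp_dil hf₀sm hf₀m hp0
  have hsubf : MemLp (fun x => f' x - f₀ x) 2 (volume : Measure (Euc n)) := hf'.sub hf₀m
  have hsubg : MemLp (fun x => g' x - g₀ x) 2 (volume : Measure (Euc n)) := hg'.sub hg₀m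
  have hdsub : MemLp (dil (fun x => f' x - f₀ x) p) 2 (volume : Measure (Euc n)) :=
    Stmt6.memLp_dil (hf'sm.sub hf₀sm) hsubf hp0
  -- decomposition
  have hsplit1 : pairing (dil (fun x => f' x - f₀ x) p) g'
      = pairing (dil f' p) g' - pairing (dil f₀ p) g' := by
    have e : dil (fun x => f' x - f₀ x) p = fun x => dil f' p x - dil f₀ p x := by
      funext x
      exact smul_sub _ _ _
    rw [e]
    exact Stmt6.pairing_sub_left hdf' hdf₀ hg'
  have hsplit2 : pairing (dil f₀ p) (fun x => g' x - g₀ x)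
      = pairing (dil f₀ p) g' - pairing (dil f₀ p) g₀ :=
    Stmt6.pairing_sub_right hdf₀ hg' hg₀m
  have hdecomp : ‖pairing (dil f' p) g'‖
      ≤ ‖pairing (dil (fun x => f' x - f₀ x) p) g'‖
        + ‖pairing (dil f₀ p) (fun x => g' x - g₀ x)‖ + ‖pairing (dil f₀ p) g₀‖ := by
    have e : pairing (dil f' p) g'
        = pairing (dil (fun x => f' x - f₀ x) p) g'
          + pairing (dil f₀ p) (fun x => g' x - g₀ x) + pairing (dil f₀ p) g₀ := by
      rw [hsplit1, hsplit2]
      ring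
    rw [e]
    exact norm_add₃_le
  -- term 1
  have hsubf_close : (eLpNorm (fun x => f' x - f₀ x) 2 (volume : Measure (Euc n))).toReal ≤ δ :=
    ENNReal.toReal_le_of_le_ofReal hδ.le hf₀close
  have ht1 : ‖pairing (dil (fun x => f' x - f₀ x) p) g'‖ ≤ δ * Ng := by
    refine le_trans (Stmt6.pairing_norm_le hdsub hg') ?_
    rw [Stmt6.eLpNorm_dil _ hp0]
    exact mul_le_mul_of_nonneg_right hsubf_close hNg
  -- term 2
  have hsubg_close : (eLpNorm (fun x => g' x - g₀ x) 2 (volume : Measure (Euc n))).toReal ≤ δ :=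
    ENNReal.toReal_le_of_le_ofReal hδ.le hg₀close
  have hNf₀ : (eLpNorm f₀ 2 (volume : Measure (Euc n))).toReal ≤ Nf + 1 := by
    have h1 : eLpNorm f₀ 2 (volume : Measure (Euc n))
        ≤ eLpNorm f' 2 (volume : Measure (Euc n)) + ENNReal.ofReal δ := by
      have e : f₀ = fun x => f' x - (f' x - f₀ x) := by funext x; ring
      calc eLpNorm f₀ 2 (volume : Measure (Euc n))
          = eLpNorm (fun x => f' x - (f' x - f₀ x)) 2 (volume : Measure (Euc n)) := by rw [← e]
        _ ≤ eLpNorm f' 2 (volume : Measure (Euc n))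
            + eLpNorm (fun x => f' x - f₀ x) 2 (volume : Measure (Euc n)) :=
            eLpNorm_sub_le hf'.1 hsubf.1 one_le_two
        _ ≤ eLpNorm f' 2 (volume : Measure (Euc n)) + ENNReal.ofReal δ :=
            add_le_add_right hf₀close _
    have h2 := ENNReal.toReal_mono (by
      exact ENNReal.add_ne_top.mpr ⟨hf'.2.ne, ENNReal.ofReal_ne_top⟩) h1
    rw [ENNReal.toReal_add hf'.2.ne ENNReal.ofReal_ne_top] at h2
    have h3 : (ENNReal.ofReal δ).toReal = δ := ENNReal.toReal_ofReal hδ.le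
    rw [h3] at h2
    linarith
  have ht2 : ‖pairing (dil f₀ p) (fun x => g' x - g₀ x)‖ ≤ (Nf + 1) * δ := by
    refine le_trans (Stmt6.pairing_norm_le hdf₀ hsubg) ?_
    rw [Stmt6.eLpNorm_dil _ hp0]
    exact mul_le_mul hNf₀ hsubg_close ENNReal.toReal_nonneg (by linarith)
  have ht12 : δ * Ng + (Nf + 1) * δ ≤ ε/4 := by
    have hδle : δ ≤ ε/(4*(Nf+Ng+2)) := min_le_right _ _
    have hpos : (0:ℝ) < Nf+Ng+2 := by linarith
    have h := mul_le_mul_of_nonneg_right hδle hpos.le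
    have he : ε/(4*(Nf+Ng+2)) * (Nf+Ng+2) = ε/4 := by
      field_simp
    have hA : δ * Ng + (Nf + 1) * δ = δ * (Nf+Ng+1) := by ring
    have hB : δ * (Nf+Ng+1) ≤ δ * (Nf+Ng+2) := mul_le_mul_of_nonneg_left (by linarith) hδ.le
    linarith
  -- term 3
  have hτD : τ * (Mf*Ig + If*Mg + 1) = ε/4 := by
    rw [hτdef]
    field_simp
  have ht3 : ‖pairing (dil f₀ p) g₀‖ ≤ ε/4 := by
    by_cases hc1 : p.1 < a₀
    · -- small scale
      have hb := Stmt6.bound_small hf₀c hf₀s hMg hp0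
      have hr : p.1 ^ ((n:ℝ)/2) ≤ τ := Stmt6.rpow_small_le hτ hn hp0 (le_of_lt hc1)
      calc ‖pairing (dil f₀ p) g₀‖ ≤ p.1 ^ ((n:ℝ)/2) * If * Mg := hb
        _ = p.1 ^ ((n:ℝ)/2) * (If * Mg) := by ring
        _ ≤ τ * (If * Mg) := mul_le_mul_of_nonneg_right hr (by positivity)
        _ ≤ τ * (Mf*Ig + If*Mg + 1) :=
            mul_le_mul_of_nonneg_left (by linarith [mul_nonneg hMf0 hIg0]) hτ.le
        _ = ε/4 := hτD
    · by_cases hc2 : a₁ < p.1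
      · -- large scale
        have hb := Stmt6.bound_large (hg₀c.integrable_of_hasCompactSupport hg₀s) hMf hp0
        have hr : p.1 ^ (-(n:ℝ)/2) ≤ τ := Stmt6.rpow_large_le hτ hn (le_of_lt hc2)
        calc ‖pairing (dil f₀ p) g₀‖ ≤ p.1 ^ (-(n:ℝ)/2) * Mf * Ig := hb
          _ = p.1 ^ (-(n:ℝ)/2) * (Mf * Ig) := by ring
          _ ≤ τ * (Mf * Ig) := mul_le_mul_of_nonneg_right hr (by positivity)
          _ ≤ τ * (Mf*Ig + If*Mg + 1) :=
              mul_le_mul_of_nonneg_left (by linarith [mul_nonneg hIf0 hMg0]) hτ.le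
          _ = ε/4 := hτD
      · -- middle scale, far translation
        push_neg at hc1 hc2
        have hcase := Stmt6.regime ha₀pos ha₁1 hB0 hp0 hs
        have hbig : B < ‖p.2‖ := by
          rcases hcase with h | h | h
          · exact absurd h (not_lt.mpr hc1)
          · exact absurd h (not_lt.mpr hc2)
          · exact h
        have := Stmt6.pairing_vanish hrf hrg hp0 hc2 hrf0 hbig
        rw [this]
        simp
        positivity
  have hfinal : ‖pairing (dil f' p) g'‖ ≤ ε/4 + ε/4 := by
    refine le_trans hdecomp ?_
    linarith
  linarith

end
end

section
/- Let n ≥ 1 and δ > 0, and define G : ℝ^{n+1}_+ → (0,∞) by G(a,b) = a^{−(n/2+δ)} if a ≥ 1 and |b| ≤ a; G(a,b) = a^{n/2}|b|^{−(n+δ)} if a ≥ 1 and |b| > a; G(a,b) = a^{n/2+δ} if a < 1 and |b| ≤ 1; G(a,b) = a^{n/2+δ}|b|^{−(n+δ)} if a < 1 and |b| > 1. Then ∫_{ℝ^{n+1}_+} G(a,b) a^{n/2} dλ(a,b) < ∞, and moreover lim_{R→∞} ∫_{D((1,0),R)^c} G(a,b) a^{n/2} dλ(a,b) = 0. -/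
open MeasureTheory Metric Set
open scoped ENNReal

noncomputable section

def gW (δ : ℝ) (a : ℝ) : ℝ := if a ≤ 1 then a ^ (δ/2 - 1) else a ^ (-(1 + δ/2))
def hW (n : ℕ) (δ : ℝ) (b : Euc n) : ℝ := max 1 ‖b‖ ^ (-((n:ℝ) + δ/2))

lemma gW_nonneg (δ : ℝ) {a : ℝ} (ha : 0 ≤ a) : 0 ≤ gW δ a := by
  unfold gW; split <;> exact Real.rpow_nonneg ha _

lemma rpow3m {a : ℝ} (ha : 0 < a) (x y z : ℝ) :
    a ^ x * (a ^ y * a ^ z) = a ^ (x + y + z) := by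
  rw [Real.rpow_add ha, Real.rpow_add ha]; ring

lemma rpow3l {a : ℝ} (ha : 0 < a) (x y z : ℝ) :
    a ^ x * a ^ y * a ^ z = a ^ (x + y + z) := by
  rw [Real.rpow_add ha, Real.rpow_add ha]

lemma le_gW (δ : ℝ) {a : ℝ} (h1 : 1 ≤ a) : a ^ (-(1 + δ/2)) ≤ gW δ a := by
  unfold gW; split_ifs with h
  · have ha1 : a = 1 := le_antisymm h h1
    subst ha1; simp
  · exact le_refl _

lemma key (n : ℕ) (δ : ℝ) (hδ : 0 < δ) (p : ℝ × Euc n) (ha : 0 < p.1) :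
    p.1 ^ (-((n:ℝ)+1)) * (Gfun n δ p * p.1 ^ ((n:ℝ)/2)) ≤ gW δ p.1 * hW n δ p.2 := by
  obtain ⟨a, b⟩ := p
  simp only at ha ⊢
  have hb0 : (0:ℝ) ≤ ‖b‖ := norm_nonneg b
  have hmax1 : (1:ℝ) ≤ max 1 ‖b‖ := le_max_left _ _
  have hmaxpos : (0:ℝ) < max 1 ‖b‖ := lt_of_lt_of_le one_pos hmax1
  simp only [Gfun, hW]
  by_cases h1 : (1:ℝ) ≤ a
  · by_cases h2 : ‖b‖ ≤ a
    · rw [if_pos h1, if_pos h2]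
      have hmaxa : max 1 ‖b‖ ≤ a := max_le h1 h2
      have h3 : a ^ (-((n:ℝ)+δ/2)) ≤ max 1 ‖b‖ ^ (-((n:ℝ)+δ/2)) :=
        Real.rpow_le_rpow_of_nonpos hmaxpos hmaxa (by positivity |> neg_nonpos.mpr)
      calc a ^ (-((n:ℝ)+1)) * (a ^ (-((n:ℝ)/2+δ)) * a ^ ((n:ℝ)/2))
          = a ^ ((-((n:ℝ)+1)) + (-((n:ℝ)/2+δ)) + ((n:ℝ)/2)) := rpow3m ha _ _ _
        _ = a ^ ((-(1+δ/2)) + (-((n:ℝ)+δ/2))) := by congr 1; ring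
        _ = a ^ (-(1+δ/2)) * a ^ (-((n:ℝ)+δ/2)) := Real.rpow_add ha _ _
        _ ≤ gW δ a * (max 1 ‖b‖ ^ (-((n:ℝ)+δ/2))) := by
            apply mul_le_mul (le_gW δ h1) h3 (Real.rpow_nonneg ha.le _)
              (gW_nonneg δ ha.le)
    · rw [if_pos h1, if_neg h2]
      push_neg at h2
      have hbpos : (0:ℝ) < ‖b‖ := lt_trans ha h2
      have hmaxb : max 1 ‖b‖ = ‖b‖ := max_eq_right (le_trans h1 h2.le)
      rw [hmaxb]
      have h3 : ‖b‖ ^ (-(δ/2)) ≤ a ^ (-(δ/2)) :=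
        Real.rpow_le_rpow_of_nonpos ha h2.le (by positivity |> neg_nonpos.mpr)
      calc a ^ (-((n:ℝ)+1)) * (a ^ ((n:ℝ)/2) * ‖b‖ ^ (-((n:ℝ)+δ)) * a ^ ((n:ℝ)/2))
          = (a ^ (-((n:ℝ)+1)) * a ^ ((n:ℝ)/2) * a ^ ((n:ℝ)/2)) * ‖b‖ ^ (-((n:ℝ)+δ)) := by
            ring
        _ = a ^ (-(1:ℝ)) * ‖b‖ ^ (-((n:ℝ)+δ)) := by
            rw [rpow3l ha]
            have he : (-((n:ℝ)+1)) + ((n:ℝ)/2) + ((n:ℝ)/2) = -(1:ℝ) := by ring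
            rw [he]
        _ = a ^ (-(1:ℝ)) * (‖b‖ ^ (-(δ/2)) * ‖b‖ ^ (-((n:ℝ)+δ/2))) := by
            have he : (-((n:ℝ)+δ)) = (-(δ/2)) + (-((n:ℝ)+δ/2)) := by ring
            rw [he, Real.rpow_add hbpos]
        _ ≤ a ^ (-(1:ℝ)) * (a ^ (-(δ/2)) * ‖b‖ ^ (-((n:ℝ)+δ/2))) := by
            apply mul_le_mul_of_nonneg_left _ (Real.rpow_nonneg ha.le _)
            exact mul_le_mul_of_nonneg_right h3 (Real.rpow_nonneg hb0 _)
        _ = (a ^ (-(1:ℝ)) * a ^ (-(δ/2))) * ‖b‖ ^ (-((n:ℝ)+δ/2)) := by ring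
        _ = a ^ (-(1+δ/2)) * ‖b‖ ^ (-((n:ℝ)+δ/2)) := by
            rw [← Real.rpow_add ha]
            congr 1
            ring
        _ ≤ gW δ a * ‖b‖ ^ (-((n:ℝ)+δ/2)) :=
            mul_le_mul_of_nonneg_right (le_gW δ h1) (Real.rpow_nonneg hb0 _)
  · push_neg at h1
    have hgw : gW δ a = a ^ (δ/2 - 1) := if_pos h1.le
    have haux : a ^ (δ - 1) ≤ a ^ (δ/2 - 1) :=
      Real.rpow_le_rpow_of_exponent_ge ha h1.le (by linarith)
    by_cases h2 : ‖b‖ ≤ 1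
    · rw [if_neg (not_le.mpr h1), if_pos h2, hgw, max_eq_left h2, Real.one_rpow, mul_one]
      calc a ^ (-((n:ℝ)+1)) * (a ^ ((n:ℝ)/2+δ) * a ^ ((n:ℝ)/2))
          = a ^ ((-((n:ℝ)+1)) + ((n:ℝ)/2+δ) + ((n:ℝ)/2)) := rpow3m ha _ _ _
        _ = a ^ (δ - 1) := by congr 1; ring
        _ ≤ a ^ (δ/2 - 1) := haux
    · push_neg at h2
      rw [if_neg (not_le.mpr h1), if_neg (not_le.mpr h2), hgw, max_eq_right h2.le]
      have h3 : ‖b‖ ^ (-((n:ℝ)+δ)) ≤ ‖b‖ ^ (-((n:ℝ)+δ/2)) :=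
        Real.rpow_le_rpow_of_exponent_le h2.le (by linarith)
      calc a ^ (-((n:ℝ)+1)) * (a ^ ((n:ℝ)/2+δ) * ‖b‖ ^ (-((n:ℝ)+δ)) * a ^ ((n:ℝ)/2))
          = (a ^ (-((n:ℝ)+1)) * a ^ ((n:ℝ)/2+δ) * a ^ ((n:ℝ)/2)) * ‖b‖ ^ (-((n:ℝ)+δ)) := by
            ring
        _ = a ^ (δ - 1) * ‖b‖ ^ (-((n:ℝ)+δ)) := by
            rw [rpow3l ha]
            have he : (-((n:ℝ)+1)) + ((n:ℝ)/2+δ) + ((n:ℝ)/2) = δ - 1 := by ring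
            rw [he]
        _ ≤ a ^ (δ/2 - 1) * ‖b‖ ^ (-((n:ℝ)+δ/2)) :=
            mul_le_mul haux h3 (Real.rpow_nonneg hb0 _) (Real.rpow_nonneg ha.le _)


lemma hW_integrable (n : ℕ) (δ : ℝ) (hδ : 0 < δ) :
    Integrable (hW n δ) (volume : Measure (Euc n)) := by
  unfold hW
  set r : ℝ := (n:ℝ) + δ/2 with hr
  have hr0 : (0:ℝ) ≤ r := add_nonneg (Nat.cast_nonneg n) (by linarith)
  have hnr : ((Module.finrank ℝ (Euc n)):ℝ) < r := by
    rw [finrank_euclideanSpace_fin]; rw [hr]; linarith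
  refine ((integrable_one_add_norm (E := Euc n) (μ := volume) hnr).const_mul
    ((2:ℝ) ^ r)).mono' (Measurable.aestronglyMeasurable (by fun_prop))
    (ae_of_all _ fun b => ?_)
  have hmax1 : (1:ℝ) ≤ max 1 ‖b‖ := le_max_left _ _
  have hmaxpos : (0:ℝ) < max 1 ‖b‖ := lt_of_lt_of_le one_pos hmax1
  rw [Real.norm_of_nonneg (Real.rpow_nonneg hmaxpos.le _)]
  have h2 : 1 + ‖b‖ ≤ 2 * max 1 ‖b‖ := by
    have hl := le_max_left (1:ℝ) ‖b‖
    have hrr := le_max_right (1:ℝ) ‖b‖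
    linarith
  have h3 : (2 * max 1 ‖b‖) ^ (-r) ≤ (1+‖b‖) ^ (-r) :=
    Real.rpow_le_rpow_of_nonpos (by positivity) h2 (neg_nonpos.mpr hr0)
  calc max 1 ‖b‖ ^ (-r) = 2 ^ r * (2 ^ (-r) * max 1 ‖b‖ ^ (-r)) := by
        rw [← mul_assoc, ← Real.rpow_add two_pos, show r + -r = 0 from by ring,
          Real.rpow_zero, one_mul]
    _ = 2 ^ r * ((2 * max 1 ‖b‖) ^ (-r)) := by
        rw [Real.mul_rpow (by norm_num) hmaxpos.le]
    _ ≤ 2 ^ r * (1+‖b‖) ^ (-r) :=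
        mul_le_mul_of_nonneg_left h3 (Real.rpow_nonneg (by norm_num) r)

lemma gW_integrableOn (δ : ℝ) (hδ : 0 < δ) : IntegrableOn (gW δ) (Set.Ioi (0:ℝ)) := by
  have h1 : IntegrableOn (gW δ) (Set.Ioc (0:ℝ) 1) := by
    have h0 : IntegrableOn (fun a : ℝ => a ^ (δ/2 - 1)) (Set.Ioc (0:ℝ) 1) := by
      have := intervalIntegral.intervalIntegrable_rpow' (a := 0) (b := 1)
        (r := δ/2-1) (by linarith)
      rwa [intervalIntegrable_iff_integrableOn_Ioc_of_le zero_le_one] at this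
    exact h0.congr_fun (fun x hx => by simp [gW, hx.2]) measurableSet_Ioc
  have h2 : IntegrableOn (gW δ) (Set.Ioi (1:ℝ)) := by
    have h0 := integrableOn_Ioi_rpow_of_lt (a := -(1+δ/2)) (by linarith) (c := 1) one_pos
    exact h0.congr_fun (fun x hx => by simp [gW, not_le.mpr (mem_Ioi.mp hx)])
      measurableSet_Ioi
  have h3 := h1.union h2
  rwa [Set.Ioc_union_Ioi_eq_Ioi zero_le_one] at h3


lemma gW_measurable (δ : ℝ) : Measurable (gW δ) := by
  unfold gW
  exact Measurable.ite (measurableSet_le measurable_id measurable_const)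
    (by fun_prop) (by fun_prop)

lemma hW_measurable (n : ℕ) (δ : ℝ) : Measurable (hW n δ) := by
  unfold hW; fun_prop

lemma hypDist_meas (n : ℕ) (q : ℝ × Euc n) :
    Measurable fun p : ℝ × Euc n => hypDist q p := by
  unfold hypDist arcosh
  have h1 : Measurable fun p : ℝ × Euc n =>
      1 + (|q.1 - p.1| ^ 2 + ‖q.2 - p.2‖ ^ 2) / (2 * q.1 * p.1) := by fun_prop
  exact Real.measurable_log.comp
    (h1.add ((((h1.pow_const 2).sub measurable_const)).sqrt))

theorem statement8' (n : ℕ) (hn : 1 ≤ n) (δ : ℝ) (hδ : 0 < δ) :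
    (∫⁻ p, ENNReal.ofReal (Gfun n δ p * p.1 ^ ((n : ℝ) / 2)) ∂(lamMeas n)) < ⊤ ∧
    ∀ ε : ℝ, 0 < ε → ∃ R : ℝ,
      (∫⁻ p in farFrom (basePt n) R,
          ENNReal.ofReal (Gfun n δ p * p.1 ^ ((n : ℝ) / 2)) ∂(lamMeas n))
        ≤ ENNReal.ofReal ε := by
  have hdm : Measurable fun p : ℝ × Euc n =>
      ENNReal.ofReal (p.1 ^ (-((n:ℝ) + 1))) := by fun_prop
  set ν := ((volume : Measure ℝ).restrict (Set.Ioi (0:ℝ))).prod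
    (volume : Measure (Euc n)) with hν
  have hae : ∀ᵐ p ∂ν, 0 < p.1 := by
    rw [ae_iff]
    have hset : {p : ℝ × Euc n | ¬ 0 < p.1} = (Set.Iic 0) ×ˢ (Set.univ : Set (Euc n)) := by
      ext p; simp [not_lt]
    have hempty : Set.Iic (0:ℝ) ∩ Set.Ioi 0 = ∅ := by
      ext x; simp only [Set.mem_inter_iff, Set.mem_Iic, Set.mem_Ioi,
        Set.mem_empty_iff_false, iff_false, not_and, not_lt]
      exact fun h => h
    rw [hν, hset, Measure.prod_prod, Measure.restrict_apply measurableSet_Iic, hempty]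
    simp
  have hmain : (∫⁻ p, ENNReal.ofReal (Gfun n δ p * p.1 ^ ((n : ℝ) / 2)) ∂(lamMeas n)) < ⊤ := by
    unfold lamMeas
    rw [lintegral_withDensity_eq_lintegral_mul_non_measurable _ hdm
      (ae_of_all _ fun p => ENNReal.ofReal_lt_top)]
    refine lt_of_le_of_lt (lintegral_mono_ae (hae.mono fun p hp => ?_))
      (lt_of_le_of_lt (le_of_eq (lintegral_prod_mul
        ((gW_measurable δ).ennreal_ofReal.aemeasurable)
        ((hW_measurable n δ).ennreal_ofReal.aemeasurable)))
        (ENNReal.mul_lt_top (gW_integrableOn δ hδ).lintegral_lt_top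
          (hW_integrable n δ hδ).lintegral_lt_top))
    · show _ ≤ (fun p : ℝ × Euc n => ENNReal.ofReal (gW δ p.1) * ENNReal.ofReal (hW n δ p.2)) p
      simp only [Pi.mul_apply]
      rw [← ENNReal.ofReal_mul (Real.rpow_nonneg hp.le _),
        ← ENNReal.ofReal_mul (gW_nonneg δ hp.le)]
      exact ENNReal.ofReal_le_ofReal (key n δ hδ p hp)
  refine ⟨hmain, fun ε hε => ?_⟩
  set F : ℝ × Euc n → ℝ≥0∞ :=
    fun p => ENNReal.ofReal (Gfun n δ p * p.1 ^ ((n : ℝ) / 2)) with hF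
  set μ2 := (lamMeas n).withDensity F with hμ2
  have hsm : ∀ R : ℝ, MeasurableSet (farFrom (basePt n) R) := by
    intro R
    have : farFrom (basePt n) R =
        {p : ℝ × Euc n | 0 < p.1} ∩ {p | R ≤ hypDist (basePt n) p} := rfl
    rw [this]
    exact (measurableSet_lt measurable_const measurable_fst).inter
      (measurableSet_le measurable_const (hypDist_meas n _))
  have hμ2ne : μ2 (farFrom (basePt n) ((0:ℕ):ℝ)) ≠ ⊤ := by
    refine ne_of_lt (lt_of_le_of_lt (measure_mono (Set.subset_univ _)) ?_)
    rw [hμ2, withDensity_apply _ MeasurableSet.univ, Measure.restrict_univ]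
    exact hmain
  have hanti : Antitone fun k : ℕ => farFrom (basePt n) (k:ℝ) := by
    intro k l hkl p hp
    exact ⟨hp.1, le_trans (by exact_mod_cast hkl) hp.2⟩
  have hint : (⋂ k : ℕ, farFrom (basePt n) (k:ℝ)) = ∅ := by
    ext p
    simp only [Set.mem_iInter, Set.mem_empty_iff_false, iff_false]
    intro h
    obtain ⟨k, hk⟩ := exists_nat_gt (hypDist (basePt n) p)
    exact absurd ((h k).2) (not_le.mpr hk)
  have htend := tendsto_measure_iInter_atTop (μ := μ2) (s := fun k : ℕ => farFrom (basePt n) (k:ℝ))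
    (fun k => (hsm (k:ℝ)).nullMeasurableSet) hanti ⟨0, hμ2ne⟩
  rw [hint, measure_empty] at htend
  have hev := htend.eventually (gt_mem_nhds (ENNReal.ofReal_pos.mpr hε))
  obtain ⟨k, hk⟩ := hev.exists
  refine ⟨(k:ℝ), ?_⟩
  have heq : (∫⁻ p in farFrom (basePt n) (k:ℝ), F p ∂(lamMeas n))
      = μ2 (farFrom (basePt n) (k:ℝ)) := (withDensity_apply F (hsm _)).symm
  rw [heq]
  exact le_of_lt hk



/-- the bound function G of Lemma 4.1 satisfies
∫ G(a,b) a^{n/2} dλ(a,b) < ∞ and ∫_{D((1,0),R)^c} G(a,b) a^{n/2} dλ(a,b) → 0 as R → ∞. -/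
theorem statement8 (n : ℕ) (hn : 1 ≤ n) (δ : ℝ) (hδ : 0 < δ) :
    (∫⁻ p, ENNReal.ofReal (Gfun n δ p * p.1 ^ ((n : ℝ) / 2)) ∂(lamMeas n)) < ⊤ ∧
    ∀ ε : ℝ, 0 < ε → ∃ R : ℝ,
      (∫⁻ p in farFrom (basePt n) R,
          ENNReal.ofReal (Gfun n δ p * p.1 ^ ((n : ℝ) / 2)) ∂(lamMeas n))
        ≤ ENNReal.ofReal ε :=
  statement8' n hn δ hδ

end
end

section
/- Let n ≥ 1, δ > 0, C₀ > 0, let ψ ∈ L²(ℝⁿ), and let T be a bounded linear operator on L²(ℝⁿ) with adjoint T*. Define G : ℝ^{n+1}_+ → (0,∞) by G(a,b) = a^{−(n/2+δ)} if a ≥ 1 and |b| ≤ a; G(a,b) = a^{n/2}|b|^{−(n+δ)} if a ≥ 1 and |b| > a; G(a,b) = a^{n/2+δ} if a < 1 and |b| ≤ 1; G(a,b) = a^{n/2+δ}|b|^{−(n+δ)} if a < 1 and |b| > 1. Suppose that for all (a,b), (a',b') ∈ ℝ^{n+1}_+, |⟨Tψ_{(a',b')}, ψ_{(a,b)}⟩|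 ≤ C₀·G(a/a', (b−b')/a') and |⟨T*ψ_{(a',b')}, ψ_{(a,b)}⟩| ≤ C₀·G(a/a', (b−b')/a'). Then T is localized with respect to {ψ_{(a,b)}} with weight w(a,b) = a^{n/2}; that is, all four localization conditions hold. -/
open MeasureTheory Metric Set
open scoped ENNReal

noncomputable section

section Aux

lemma measurable_rpow_const (c : ℝ) : Measurable fun x : ℝ => x ^ c :=
  measurable_of_measurable_on_compl_singleton 0 <|
    Continuous.measurable <| continuousOn_iff_continuous_restrict.1 <|
      fun x hx => (Real.continuousAt_rpow_const x c (Or.inl hx)).continuousWithinAt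

lemma measurable_hypDist {n : ℕ} (q : ℝ × Euc n) :
    Measurable (fun p : ℝ × Euc n => hypDist q p) := by
  unfold hypDist arcosh
  have h1 : Measurable (fun p : ℝ × Euc n =>
      1 + (|q.1 - p.1| ^ 2 + ‖q.2 - p.2‖ ^ 2) / (2 * q.1 * p.1)) := by fun_prop
  exact Real.measurable_log.comp
    (h1.add (Real.continuous_sqrt.measurable.comp ((h1.pow_const 2).sub measurable_const)))

lemma measurableSet_farFrom {n : ℕ} (q : ℝ × Euc n) (R : ℝ) :
    MeasurableSet (farFrom q R) := by
  have h1 : MeasurableSet {p : ℝ × Euc n | 0 < p.1} :=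
    measurableSet_lt measurable_const measurable_fst
  have h2 : MeasurableSet {p : ℝ × Euc n | R ≤ hypDist q p} :=
    measurableSet_le measurable_const (measurable_hypDist q)
  exact h1.inter h2

lemma measurable_Gfun (n : ℕ) (δ : ℝ) : Measurable (Gfun n δ) := by
  unfold Gfun
  apply Measurable.ite (measurableSet_le measurable_const measurable_fst)
  · apply Measurable.ite (measurableSet_le measurable_snd.norm measurable_fst)
    · exact (measurable_rpow_const _).comp measurable_fst
    · exact ((measurable_rpow_const _).comp measurable_fst).mul
        ((measurable_rpow_const _).comp measurable_snd.norm)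
  · apply Measurable.ite (measurableSet_le measurable_snd.norm measurable_const)
    · exact (measurable_rpow_const _).comp measurable_fst
    · exact ((measurable_rpow_const _).comp measurable_fst).mul
        ((measurable_rpow_const _).comp measurable_snd.norm)

lemma lam_ae_pos (n : ℕ) : ∀ᵐ p ∂(lamMeas n), 0 < p.1 := by
  have hnull : (((volume : Measure ℝ).restrict (Set.Ioi (0:ℝ))).prod
      (volume : Measure (Euc n))) {p : ℝ × Euc n | ¬ 0 < p.1} = 0 := by
    refine measure_mono_null
      (t := (Set.Iic (0:ℝ)) ×ˢ (Set.univ : Set (Euc n))) (fun p hp => ?_) ?_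
    · exact ⟨not_lt.mp hp, Set.mem_univ _⟩
    · rw [Measure.prod_prod, Measure.restrict_apply measurableSet_Iic]
      have : Set.Iic (0:ℝ) ∩ Set.Ioi 0 = ∅ := by
        ext x; simp only [Set.mem_inter_iff, Set.mem_Iic, Set.mem_Ioi, Set.mem_empty_iff_false,
          iff_false, not_and, not_lt]
        intro h; exact h
      simp [this]
  have h := (withDensity_absolutelyContinuous
    (((volume : Measure ℝ).restrict (Set.Ioi (0:ℝ))).prod (volume : Measure (Euc n)))
    (fun p : ℝ × Euc n => ENNReal.ofReal (p.1 ^ (-((n : ℝ) + 1))))) hnull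
  rw [ae_iff]
  exact h

end Aux

section COV

lemma lintegral_euc_comp {n : ℕ} {a' : ℝ} (ha : 0 < a') (b' : Euc n)
    (f : Euc n → ℝ≥0∞) (hf : Measurable f) :
    ∫⁻ b, f (b' + a' • b) = ENNReal.ofReal ((a' ^ n)⁻¹) * ∫⁻ y, f y := by
  have hmap : Measure.map (fun b : Euc n => b' + a' • b) volume
      = ENNReal.ofReal ((a' ^ n)⁻¹) • (volume : Measure (Euc n)) := by
    have hco : (fun b : Euc n => b' + a' • b)
        = (fun y : Euc n => b' + y) ∘ (fun b : Euc n => a' • b) := rfl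
    rw [hco, ← Measure.map_map (measurable_const_add b') (measurable_const_smul a'),
      Measure.map_addHaar_smul volume ha.ne', Measure.map_smul,
      MeasureTheory.map_add_left_eq_self (volume : Measure (Euc n)) b']
    congr 1
    rw [finrank_euclideanSpace_fin, abs_of_nonneg (by positivity)]
  have hm : Measurable (fun b : Euc n => b' + a' • b) :=
    (measurable_const_add b').comp (measurable_const_smul a')
  calc ∫⁻ b, f (b' + a' • b)
      = ∫⁻ y, f y ∂(Measure.map (fun b : Euc n => b' + a' • b) volume) :=
        (lintegral_map hf hm).symm
    _ = ENNReal.ofReal ((a' ^ n)⁻¹) * ∫⁻ y, f y := by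
        rw [hmap, lintegral_smul_measure, smul_eq_mul]

lemma lintegral_Ioi_comp {a' : ℝ} (ha : 0 < a') (f : ℝ → ℝ≥0∞) (hf : Measurable f) :
    ∫⁻ a in Set.Ioi (0:ℝ), f (a' * a) = ENNReal.ofReal a'⁻¹ * ∫⁻ u in Set.Ioi (0:ℝ), f u := by
  have hpre : (fun a : ℝ => a' * a) ⁻¹' (Set.Ioi 0) = Set.Ioi 0 := by
    ext x; simp [Set.mem_Ioi, mul_pos_iff_of_pos_left ha]
  calc ∫⁻ a in Set.Ioi (0:ℝ), f (a' * a)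
      = ∫⁻ u, f u ∂(Measure.map (fun a : ℝ => a' * a)
          ((volume : Measure ℝ).restrict (Set.Ioi 0))) := by
        rw [lintegral_map hf (measurable_const_mul a')]
    _ = ∫⁻ u, f u ∂((Measure.map (fun a : ℝ => a' * a) (volume : Measure ℝ)).restrict
          (Set.Ioi 0)) := by
        rw [Measure.restrict_map (measurable_const_mul a') measurableSet_Ioi, hpre]
    _ = ENNReal.ofReal a'⁻¹ * ∫⁻ u in Set.Ioi (0:ℝ), f u := by
        rw [Real.map_volume_mul_left ha.ne', Measure.restrict_smul, lintegral_smul_measure,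
          abs_of_nonneg (by positivity), smul_eq_mul]

end COV

section Inv

lemma lam_comp (n : ℕ) {a' : ℝ} (ha : 0 < a') (b' : Euc n)
    (g : ℝ × Euc n → ℝ≥0∞) (hg : Measurable g) :
    ∫⁻ q, g (a' * q.1, b' + a' • q.2) ∂(lamMeas n) = ∫⁻ p, g p ∂(lamMeas n) := by
  set μ₁ : Measure ℝ := (volume : Measure ℝ).restrict (Set.Ioi 0) with hμ₁
  set μ₂ : Measure (Euc n) := volume with hμ₂
  have hd : Measurable (fun p : ℝ × Euc n => ENNReal.ofReal (p.1 ^ (-((n : ℝ) + 1)))) :=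
    (((measurable_rpow_const _).comp measurable_fst)).ennreal_ofReal
  have hΦ : Measurable (fun q : ℝ × Euc n => (a' * q.1, b' + a' • q.2)) :=
    ((measurable_const_mul a').comp measurable_fst).prodMk
      ((measurable_const_add b').comp ((measurable_const_smul a').comp measurable_snd))
  -- F u = density * slice integral
  set F : ℝ → ℝ≥0∞ := fun u => ENNReal.ofReal (u ^ (-((n : ℝ) + 1))) * ∫⁻ y, g (u, y) ∂μ₂
    with hF
  have hgsl : Measurable fun u : ℝ => ∫⁻ y, g (u, y) ∂μ₂ :=
    hg.lintegral_prod_right'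
  have hFm : Measurable F :=
    ((measurable_rpow_const _).ennreal_ofReal).mul hgsl
  have hgΦ : Measurable fun q : ℝ × Euc n => g (a' * q.1, b' + a' • q.2) := hg.comp hΦ
  rw [lamMeas, lintegral_withDensity_eq_lintegral_mul _ hd hgΦ,
    lintegral_withDensity_eq_lintegral_mul _ hd hg]
  simp only [Pi.mul_apply]
  rw [lintegral_prod (fun z : ℝ × Euc n => ENNReal.ofReal (z.1 ^ (-((n : ℝ) + 1))) * g (a' * z.1, b' + a' • z.2)) ((hd.mul hgΦ).aemeasurable),
    lintegral_prod (fun z : ℝ × Euc n => ENNReal.ofReal (z.1 ^ (-((n : ℝ) + 1))) * g z) ((hd.mul hg).aemeasurable)]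
  have hRHS : ∀ a : ℝ,
      (∫⁻ b, (ENNReal.ofReal (a ^ (-((n : ℝ) + 1)))) * g (a, b) ∂μ₂) = F a := by
    intro a
    have hm : Measurable fun b : Euc n => g (a, b) := hg.comp measurable_prodMk_left
    rw [lintegral_const_mul _ hm]
  have hLHS : ∀ a ∈ Set.Ioi (0:ℝ),
      (∫⁻ b, (ENNReal.ofReal (a ^ (-((n : ℝ) + 1)))) * g (a' * a, b' + a' • b) ∂μ₂)
        = ENNReal.ofReal ((a' ^ n)⁻¹ * a' ^ ((n : ℝ) + 1)) * F (a' * a) := by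
    intro a haa
    have hap : 0 < a := haa
    have hga : Measurable fun y : Euc n => g (a' * a, y) := hg.comp measurable_prodMk_left
    have hm2 : Measurable fun b : Euc n => g (a' * a, b' + a' • b) :=
      hga.comp ((measurable_const_add b').comp (measurable_const_smul a'))
    rw [lintegral_const_mul _ hm2, lintegral_euc_comp ha b' _ hga]
    have hdens : (a : ℝ) ^ (-((n : ℝ) + 1)) = a' ^ ((n : ℝ) + 1) * (a' * a) ^ (-((n : ℝ) + 1)) := by
      rw [Real.mul_rpow ha.le hap.le, ← mul_assoc, ← Real.rpow_add ha,
        show ((n:ℝ) + 1 + -((n:ℝ) + 1)) = 0 by ring, Real.rpow_zero, one_mul]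
    rw [hdens, hF]
    rw [ENNReal.ofReal_mul (by positivity), ENNReal.ofReal_mul (by positivity)]
    ring
  calc ∫⁻ a, ∫⁻ b, (ENNReal.ofReal ((a, b).1 ^ (-((n : ℝ) + 1))))
          * g (a' * (a, b).1, b' + a' • (a, b).2) ∂μ₂ ∂μ₁
      = ∫⁻ a in Set.Ioi (0:ℝ), ENNReal.ofReal ((a' ^ n)⁻¹ * a' ^ ((n : ℝ) + 1))
          * F (a' * a) ∂volume := by
        rw [hμ₁]
        exact setLIntegral_congr_fun measurableSet_Ioi hLHS
    _ = ENNReal.ofReal ((a' ^ n)⁻¹ * a' ^ ((n : ℝ) + 1)) * (ENNReal.ofReal a'⁻¹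
          * ∫⁻ u in Set.Ioi (0:ℝ), F u) := by
        have hm3 : Measurable fun a : ℝ => F (a' * a) := hFm.comp (measurable_const_mul a')
        rw [lintegral_const_mul _ hm3, lintegral_Ioi_comp ha F hFm]
    _ = ∫⁻ u in Set.Ioi (0:ℝ), F u := by
        rw [← mul_assoc, ← ENNReal.ofReal_mul (by positivity)]
        have : (a' ^ n)⁻¹ * a' ^ ((n : ℝ) + 1) * a'⁻¹ = 1 := by
          rw [Real.rpow_add ha, Real.rpow_natCast, Real.rpow_one]
          field_simp
        rw [this, ENNReal.ofReal_one, one_mul]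
    _ = ∫⁻ a, ∫⁻ b, (ENNReal.ofReal ((a, b).1 ^ (-((n : ℝ) + 1)))) * g ((a, b).1, (a, b).2) ∂μ₂ ∂μ₁ := by
        rw [hμ₁]
        refine (setLIntegral_congr_fun measurableSet_Ioi
          (fun a _ => ?_)).symm
        exact hRHS a

end Inv

section Finite

def hfun (δ : ℝ) (a : ℝ) : ℝ := if 1 ≤ a then a ^ (-(1 + δ/2)) else a ^ (δ - 1)

def kfun (n : ℕ) (δ : ℝ) (b : Euc n) : ℝ := (1 + ‖b‖) ^ (-((n:ℝ) + δ/2))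

lemma hfun_nonneg (δ : ℝ) {a : ℝ} (ha : 0 ≤ a) : 0 ≤ hfun δ a := by
  unfold hfun; split <;> exact Real.rpow_nonneg ha _

lemma G_pointwise (n : ℕ) {δ : ℝ} (hδ : 0 < δ) {a : ℝ} (ha : 0 < a) (b : Euc n) :
    Gfun n δ (a, b) * a ^ ((n:ℝ)/2) * a ^ (-((n:ℝ)+1))
      ≤ 2 ^ ((n:ℝ) + δ) * (hfun δ a * kfun n δ b) := by
  set s : ℝ := (n:ℝ) with hs
  have hsnn : 0 ≤ s := Nat.cast_nonneg n
  have hb0 : (0:ℝ) ≤ ‖b‖ := norm_nonneg b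
  have h1b : (0:ℝ) < 1 + ‖b‖ := by linarith
  have hc : (0:ℝ) < (1 + ‖b‖) ^ (s + δ/2) := Real.rpow_pos_of_pos h1b _
  have h2pow : (2:ℝ) ^ (s + δ/2) ≤ 2 ^ (s + δ) :=
    Real.rpow_le_rpow_of_exponent_le one_le_two (by linarith)
  have key : Gfun n δ (a, b) * a ^ (s/2) * a ^ (-(s+1)) * (1 + ‖b‖) ^ (s + δ/2)
      ≤ 2 ^ (s + δ) * hfun δ a := by
    simp only [Gfun, hfun]
    by_cases h1 : 1 ≤ a
    · rw [if_pos h1, if_pos h1]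
      by_cases h2 : ‖b‖ ≤ a
      · rw [if_pos h2]
        have e1 : a ^ (-(s/2 + δ)) * a ^ (s/2) * a ^ (-(s+1)) = a ^ (-(s+1+δ)) := by
          rw [← Real.rpow_add ha, ← Real.rpow_add ha,
            show -(s/2 + δ) + s/2 + -(s+1) = -(s+1+δ) by ring]
        rw [e1]
        calc a ^ (-(s+1+δ)) * (1 + ‖b‖) ^ (s + δ/2)
            ≤ a ^ (-(s+1+δ)) * (2*a) ^ (s + δ/2) := by
              apply mul_le_mul_of_nonneg_left _ (Real.rpow_nonneg ha.le _)
              exact Real.rpow_le_rpow h1b.le (by linarith) (by positivity)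
          _ = 2 ^ (s + δ/2) * (a ^ (-(s+1+δ)) * a ^ (s + δ/2)) := by
              rw [Real.mul_rpow (by norm_num) ha.le]; ring
          _ = 2 ^ (s + δ/2) * a ^ (-(1 + δ/2)) := by
              rw [← Real.rpow_add ha, show -(s+1+δ) + (s + δ/2) = -(1 + δ/2) by ring]
          _ ≤ 2 ^ (s + δ) * a ^ (-(1 + δ/2)) :=
              mul_le_mul_of_nonneg_right h2pow (Real.rpow_nonneg ha.le _)
      · rw [if_neg h2]
        push_neg at h2
        have hbpos : (0:ℝ) < ‖b‖ := lt_trans ha h2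
        have hb1 : (1:ℝ) ≤ ‖b‖ := le_trans h1 h2.le
        have e1 : a ^ (s/2) * ‖b‖ ^ (-(s+δ)) * a ^ (s/2) * a ^ (-(s+1))
            = a ^ (-1:ℝ) * ‖b‖ ^ (-(s+δ)) := by
          rw [show a ^ (s/2) * ‖b‖ ^ (-(s+δ)) * a ^ (s/2) * a ^ (-(s+1))
              = a ^ (s/2) * a ^ (s/2) * a ^ (-(s+1)) * ‖b‖ ^ (-(s+δ)) by ring,
            ← Real.rpow_add ha, ← Real.rpow_add ha,
            show s/2 + s/2 + -(s+1) = (-1:ℝ) by ring]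
        rw [e1]
        calc a ^ (-1:ℝ) * ‖b‖ ^ (-(s+δ)) * (1 + ‖b‖) ^ (s + δ/2)
            ≤ a ^ (-1:ℝ) * ‖b‖ ^ (-(s+δ)) * (2*‖b‖) ^ (s + δ/2) := by
              apply mul_le_mul_of_nonneg_left _ (by positivity)
              exact Real.rpow_le_rpow h1b.le (by linarith) (by positivity)
          _ = 2 ^ (s + δ/2) * (a ^ (-1:ℝ) * (‖b‖ ^ (-(s+δ)) * ‖b‖ ^ (s + δ/2))) := by
              rw [Real.mul_rpow (by norm_num) hb0]; ring
          _ = 2 ^ (s + δ/2) * (a ^ (-1:ℝ) * ‖b‖ ^ (-(δ/2))) := by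
              rw [← Real.rpow_add hbpos, show -(s+δ) + (s + δ/2) = -(δ/2) by ring]
          _ ≤ 2 ^ (s + δ/2) * (a ^ (-1:ℝ) * a ^ (-(δ/2))) := by
              apply mul_le_mul_of_nonneg_left _ (by positivity)
              apply mul_le_mul_of_nonneg_left _ (by positivity)
              rw [Real.rpow_neg hbpos.le, Real.rpow_neg ha.le]
              exact inv_anti₀ (Real.rpow_pos_of_pos ha _)
                (Real.rpow_le_rpow ha.le h2.le (by positivity))
          _ = 2 ^ (s + δ/2) * a ^ (-(1 + δ/2)) := by
              rw [← Real.rpow_add ha, show (-1:ℝ) + -(δ/2) = -(1 + δ/2) by ring]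
          _ ≤ 2 ^ (s + δ) * a ^ (-(1 + δ/2)) :=
              mul_le_mul_of_nonneg_right h2pow (Real.rpow_nonneg ha.le _)
    · rw [if_neg h1, if_neg h1]
      by_cases h2 : ‖b‖ ≤ 1
      · rw [if_pos h2]
        have e1 : a ^ (s/2 + δ) * a ^ (s/2) * a ^ (-(s+1)) = a ^ (δ - 1) := by
          rw [← Real.rpow_add ha, ← Real.rpow_add ha,
            show s/2 + δ + s/2 + -(s+1) = δ - 1 by ring]
        rw [e1]
        calc a ^ (δ-1) * (1 + ‖b‖) ^ (s + δ/2)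
            ≤ a ^ (δ-1) * 2 ^ (s + δ/2) := by
              apply mul_le_mul_of_nonneg_left _ (Real.rpow_nonneg ha.le _)
              exact Real.rpow_le_rpow h1b.le (by linarith) (by positivity)
          _ ≤ a ^ (δ-1) * 2 ^ (s + δ) :=
              mul_le_mul_of_nonneg_left h2pow (Real.rpow_nonneg ha.le _)
          _ = 2 ^ (s + δ) * a ^ (δ-1) := mul_comm _ _
      · rw [if_neg h2]
        push_neg at h2
        have hbpos : (0:ℝ) < ‖b‖ := lt_trans one_pos h2
        have e1 : a ^ (s/2 + δ) * ‖b‖ ^ (-(s+δ)) * a ^ (s/2) * a ^ (-(s+1))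
            = a ^ (δ - 1) * ‖b‖ ^ (-(s+δ)) := by
          rw [show a ^ (s/2 + δ) * ‖b‖ ^ (-(s+δ)) * a ^ (s/2) * a ^ (-(s+1))
              = a ^ (s/2 + δ) * a ^ (s/2) * a ^ (-(s+1)) * ‖b‖ ^ (-(s+δ)) by ring,
            ← Real.rpow_add ha, ← Real.rpow_add ha,
            show s/2 + δ + s/2 + -(s+1) = δ - 1 by ring]
        rw [e1]
        calc a ^ (δ-1) * ‖b‖ ^ (-(s+δ)) * (1 + ‖b‖) ^ (s + δ/2)
            ≤ a ^ (δ-1) * ‖b‖ ^ (-(s+δ)) * (2*‖b‖) ^ (s + δ/2) := by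
              apply mul_le_mul_of_nonneg_left _ (by positivity)
              exact Real.rpow_le_rpow h1b.le (by linarith) (by positivity)
          _ = 2 ^ (s + δ/2) * (a ^ (δ-1) * (‖b‖ ^ (-(s+δ)) * ‖b‖ ^ (s + δ/2))) := by
              rw [Real.mul_rpow (by norm_num) hb0]; ring
          _ = 2 ^ (s + δ/2) * (a ^ (δ-1) * ‖b‖ ^ (-(δ/2))) := by
              rw [← Real.rpow_add hbpos, show -(s+δ) + (s + δ/2) = -(δ/2) by ring]
          _ ≤ 2 ^ (s + δ/2) * (a ^ (δ-1) * 1) := by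
              apply mul_le_mul_of_nonneg_left _ (by positivity)
              apply mul_le_mul_of_nonneg_left _ (Real.rpow_nonneg ha.le _)
              exact Real.rpow_le_one_of_one_le_of_nonpos h2.le (by linarith)
          _ ≤ 2 ^ (s + δ) * a ^ (δ-1) := by
              rw [mul_one]
              exact mul_le_mul_of_nonneg_right h2pow (Real.rpow_nonneg ha.le _)
  calc Gfun n δ (a, b) * a ^ (s/2) * a ^ (-(s+1))
      = (Gfun n δ (a, b) * a ^ (s/2) * a ^ (-(s+1)) * (1 + ‖b‖) ^ (s + δ/2))
          / (1 + ‖b‖) ^ (s + δ/2) := (mul_div_cancel_right₀ _ hc.ne').symm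
    _ ≤ (2 ^ (s + δ) * hfun δ a) / (1 + ‖b‖) ^ (s + δ/2) := by gcongr
    _ = 2 ^ (s + δ) * (hfun δ a * kfun n δ b) := by
        rw [kfun, Real.rpow_neg h1b.le]; ring

end Finite

section Ifull

lemma Gfun_nonneg (n : ℕ) (δ : ℝ) {p : ℝ × Euc n} (hp : 0 < p.1) : 0 ≤ Gfun n δ p := by
  unfold Gfun
  split
  · split
    · exact Real.rpow_nonneg hp.le _
    · exact mul_nonneg (Real.rpow_nonneg hp.le _) (Real.rpow_nonneg (norm_nonneg _) _)
  · split
    · exact Real.rpow_nonneg hp.le _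
    · exact mul_nonneg (Real.rpow_nonneg hp.le _) (Real.rpow_nonneg (norm_nonneg _) _)

lemma measurable_hfun (δ : ℝ) : Measurable (hfun δ) := by
  unfold hfun
  exact Measurable.ite (measurableSet_le measurable_const measurable_id)
    (measurable_rpow_const _) (measurable_rpow_const _)

lemma measurable_kfun (n : ℕ) (δ : ℝ) : Measurable (kfun n δ) := by
  unfold kfun
  exact (measurable_rpow_const _).comp (measurable_const.add measurable_norm)

lemma base_ae_pos (n : ℕ) :
    ∀ᵐ p ∂(((volume : Measure ℝ).restrict (Set.Ioi (0:ℝ))).prod (volume : Measure (Euc n))),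
      0 < p.1 := by
  rw [ae_iff]
  refine measure_mono_null
    (t := (Set.Iic (0:ℝ)) ×ˢ (Set.univ : Set (Euc n))) (fun p hp => ?_) ?_
  · exact ⟨not_lt.mp hp, Set.mem_univ _⟩
  · rw [Measure.prod_prod, Measure.restrict_apply measurableSet_Iic]
    have : Set.Iic (0:ℝ) ∩ Set.Ioi 0 = ∅ := by
      ext x; simp only [Set.mem_inter_iff, Set.mem_Iic, Set.mem_Ioi, Set.mem_empty_iff_false,
        iff_false, not_and, not_lt]
      intro h; exact h
    simp [this]

lemma lintegral_hfun_lt_top {δ : ℝ} (hδ : 0 < δ) :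
    ∫⁻ a in Set.Ioi (0:ℝ), ENNReal.ofReal (hfun δ a) < ⊤ := by
  rw [← Set.Ioo_union_Ici_eq_Ioi (zero_lt_one (α := ℝ)),
    lintegral_union measurableSet_Ici ((Set.Iio_disjoint_Ici le_rfl).mono_left Set.Ioo_subset_Iio_self)]
  have h1 : ∫⁻ a in Set.Ioo (0:ℝ) 1, ENNReal.ofReal (hfun δ a) < ⊤ := by
    have hcg : ∀ a ∈ Set.Ioo (0:ℝ) 1, ENNReal.ofReal (hfun δ a)
        = ENNReal.ofReal (a ^ (δ - 1)) := by
      intro a haa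
      rw [hfun, if_neg (not_le.mpr haa.2)]
    rw [setLIntegral_congr_fun measurableSet_Ioo hcg]
    exact ((intervalIntegral.integrableOn_Ioo_rpow_iff (zero_lt_one)).2 (by linarith)).lintegral_lt_top
  have h2 : ∫⁻ a in Set.Ici (1:ℝ), ENNReal.ofReal (hfun δ a) < ⊤ := by
    rw [setLIntegral_congr (Ioi_ae_eq_Ici (a := (1:ℝ))).symm]
    have hcg : ∀ a ∈ Set.Ioi (1:ℝ), ENNReal.ofReal (hfun δ a)
        = ENNReal.ofReal (a ^ (-(1 + δ/2))) := by
      intro a haa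
      rw [hfun, if_pos (le_of_lt haa)]
    rw [setLIntegral_congr_fun measurableSet_Ioi hcg]
    exact ((integrableOn_Ioi_rpow_iff (zero_lt_one)).2 (by linarith)).lintegral_lt_top
  exact ENNReal.add_lt_top.mpr ⟨h1, h2⟩

lemma lintegral_kfun_lt_top (n : ℕ) {δ : ℝ} (hδ : 0 < δ) :
    ∫⁻ b : Euc n, ENNReal.ofReal (kfun n δ b) < ⊤ := by
  have hint : Integrable (fun b : Euc n => (1 + ‖b‖) ^ (-((n:ℝ) + δ/2))) volume := by
    apply integrable_one_add_norm
    rw [finrank_euclideanSpace_fin]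
    linarith
  exact hint.lintegral_lt_top

lemma Ifull_lt_top (n : ℕ) {δ C₀ : ℝ} (hδ : 0 < δ) (hC₀ : 0 < C₀) :
    ∫⁻ p, ENNReal.ofReal (C₀ * Gfun n δ p * p.1 ^ ((n:ℝ)/2)) ∂(lamMeas n) < ⊤ := by
  have hd : Measurable (fun p : ℝ × Euc n => ENNReal.ofReal (p.1 ^ (-((n : ℝ) + 1)))) :=
    ((measurable_rpow_const _).comp measurable_fst).ennreal_ofReal
  have hFm : Measurable fun p : ℝ × Euc n =>
      ENNReal.ofReal (C₀ * Gfun n δ p * p.1 ^ ((n:ℝ)/2)) :=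
    ((measurable_const.mul (measurable_Gfun n δ)).mul
      ((measurable_rpow_const _).comp measurable_fst)).ennreal_ofReal
  rw [lamMeas, lintegral_withDensity_eq_lintegral_mul _ hd hFm]
  have hbound : ∫⁻ p, ((fun p : ℝ × Euc n => ENNReal.ofReal (p.1 ^ (-((n : ℝ) + 1)))) *
        fun p : ℝ × Euc n => ENNReal.ofReal (C₀ * Gfun n δ p * p.1 ^ ((n:ℝ)/2))) p
        ∂(((volume : Measure ℝ).restrict (Set.Ioi (0:ℝ))).prod (volume : Measure (Euc n)))
      ≤ ∫⁻ p : ℝ × Euc n, ENNReal.ofReal (C₀ * 2 ^ ((n:ℝ) + δ)) *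
          (ENNReal.ofReal (hfun δ p.1) * ENNReal.ofReal (kfun n δ p.2))
        ∂(((volume : Measure ℝ).restrict (Set.Ioi (0:ℝ))).prod (volume : Measure (Euc n))) := by
    refine lintegral_mono_ae ?_
    filter_upwards [base_ae_pos n] with p hp
    simp only [Pi.mul_apply]
    rw [← ENNReal.ofReal_mul (Real.rpow_nonneg hp.le _)]
    rw [← ENNReal.ofReal_mul (hfun_nonneg δ hp.le), ← ENNReal.ofReal_mul
      (mul_nonneg hC₀.le (Real.rpow_nonneg (by norm_num) _))]
    apply ENNReal.ofReal_le_ofReal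
    have hGp := G_pointwise n hδ hp p.2
    calc p.1 ^ (-((n:ℝ) + 1)) * (C₀ * Gfun n δ p * p.1 ^ ((n:ℝ)/2))
        = C₀ * (Gfun n δ (p.1, p.2) * p.1 ^ ((n:ℝ)/2) * p.1 ^ (-((n:ℝ)+1))) := by ring
      _ ≤ C₀ * (2 ^ ((n:ℝ) + δ) * (hfun δ p.1 * kfun n δ p.2)) :=
          mul_le_mul_of_nonneg_left hGp hC₀.le
      _ = C₀ * 2 ^ ((n:ℝ) + δ) * (hfun δ p.1 * kfun n δ p.2) := by ring
  refine lt_of_le_of_lt hbound ?_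
  have hmm : Measurable fun p : ℝ × Euc n =>
      ENNReal.ofReal (hfun δ p.1) * ENNReal.ofReal (kfun n δ p.2) :=
    (((measurable_hfun δ).comp measurable_fst).ennreal_ofReal).mul
      (((measurable_kfun n δ).comp measurable_snd).ennreal_ofReal)
  rw [lintegral_const_mul _ hmm]
  rw [lintegral_prod_mul ((measurable_hfun δ).ennreal_ofReal.aemeasurable)
    ((measurable_kfun n δ).ennreal_ofReal.aemeasurable)]
  exact ENNReal.mul_lt_top ENNReal.ofReal_lt_top
    (ENNReal.mul_lt_top (lintegral_hfun_lt_top hδ) (lintegral_kfun_lt_top n hδ))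

end Ifull

section Master

lemma hypDist_comp (n : ℕ) {p' : ℝ × Euc n} (hp' : 0 < p'.1) {q : ℝ × Euc n} (hq : 0 < q.1) :
    hypDist p' (p'.1 * q.1, p'.2 + p'.1 • q.2) = hypDist (basePt n) q := by
  unfold hypDist basePt
  congr 1
  have h1 : |p'.1 - (p'.1 * q.1, p'.2 + p'.1 • q.2).1| = p'.1 * |1 - q.1| := by
    rw [show p'.1 - (p'.1 * q.1, p'.2 + p'.1 • q.2).1 = p'.1 * (1 - q.1) by ring, abs_mul,
      abs_of_pos hp']
  have h2 : ‖p'.2 - (p'.1 * q.1, p'.2 + p'.1 • q.2).2‖ = p'.1 * ‖q.2‖ := by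
    have : p'.2 - (p'.2 + p'.1 • q.2) = -(p'.1 • q.2) := by abel
    rw [show (p'.1 * q.1, p'.2 + p'.1 • q.2).2 = p'.2 + p'.1 • q.2 from rfl, this, norm_neg,
      norm_smul, Real.norm_eq_abs, abs_of_pos hp']
  rw [h1, h2, show ((1:ℝ), (0:Euc n)).2 - q.2 = -q.2 by simp, norm_neg]
  rw [show ((1:ℝ), (0:Euc n)).1 = (1:ℝ) from rfl]
  have hne : (2 : ℝ) * p'.1 * (p'.1 * q.1) ≠ 0 := by positivity
  have hne2 : (2 : ℝ) * 1 * q.1 ≠ 0 := by positivity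
  field_simp

lemma farFrom_preimage (n : ℕ) {p' : ℝ × Euc n} (hp' : 0 < p'.1) (R : ℝ) :
    (fun q : ℝ × Euc n => (p'.1 * q.1, p'.2 + p'.1 • q.2)) ⁻¹' (farFrom p' R)
      = farFrom (basePt n) R := by
  ext q
  simp only [Set.mem_preimage, farFrom, Set.mem_setOf_eq]
  constructor
  · rintro ⟨h1, h2⟩
    have hq : 0 < q.1 := by
      by_contra hq
      push_neg at hq
      nlinarith
    exact ⟨hq, by rwa [hypDist_comp n hp' hq] at h2⟩
  · rintro ⟨hq, h2⟩
    exact ⟨by positivity, by rwa [hypDist_comp n hp' hq]⟩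

lemma master (n : ℕ) {δ C₀ : ℝ} (hδ : 0 < δ) (hC₀ : 0 < C₀) (ψ : Euc n → ℂ)
    (S : L2 n →L[ℂ] L2 n)
    (hbd : ∀ p p' : ℝ × Euc n, 0 < p.1 → 0 < p'.1 →
      ‖pairing (⇑(S (toL2 (dil ψ p')))) (dil ψ p)‖
        ≤ C₀ * Gfun n δ (p.1 / p'.1, (p'.1)⁻¹ • (p.2 - p'.2)))
    {p' : ℝ × Euc n} (hp' : 0 < p'.1) {Sset : Set (ℝ × Euc n)} (hSm : MeasurableSet Sset) :
    (∫⁻ p in Sset, ENNReal.ofReal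
        (‖pairing (⇑(S (toL2 (dil ψ p')))) (dil ψ p)‖ * p.1 ^ ((n:ℝ)/2)) ∂(lamMeas n))
      ≤ ENNReal.ofReal (p'.1 ^ ((n:ℝ)/2)) *
        ∫⁻ q in (fun q : ℝ × Euc n => (p'.1 * q.1, p'.2 + p'.1 • q.2)) ⁻¹' Sset,
          ENNReal.ofReal (C₀ * Gfun n δ q * q.1 ^ ((n:ℝ)/2)) ∂(lamMeas n) := by
  set Φ : ℝ × Euc n → ℝ × Euc n := fun q => (p'.1 * q.1, p'.2 + p'.1 • q.2) with hΦ
  have hΦm : Measurable Φ :=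
    ((measurable_const_mul p'.1).comp measurable_fst).prodMk
      ((measurable_const_add p'.2).comp ((measurable_const_smul p'.1).comp measurable_snd))
  set G1 : ℝ × Euc n → ℝ≥0∞ := fun p =>
    ENNReal.ofReal (C₀ * Gfun n δ (p.1 / p'.1, (p'.1)⁻¹ • (p.2 - p'.2)) * p.1 ^ ((n:ℝ)/2))
    with hG1
  have hG1m : Measurable G1 := by
    apply Measurable.ennreal_ofReal
    apply Measurable.mul
    · apply Measurable.mul measurable_const
      exact (measurable_Gfun n δ).comp
        ((measurable_fst.div_const _).prodMk
          (by fun_prop))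
    · exact (measurable_rpow_const _).comp measurable_fst
  set F : ℝ × Euc n → ℝ≥0∞ := fun q =>
    ENNReal.ofReal (C₀ * Gfun n δ q * q.1 ^ ((n:ℝ)/2)) with hFdef
  have hFm : Measurable F :=
    ((measurable_const.mul (measurable_Gfun n δ)).mul
      ((measurable_rpow_const _).comp measurable_fst)).ennreal_ofReal
  have step1 : (∫⁻ p in Sset, ENNReal.ofReal
      (‖pairing (⇑(S (toL2 (dil ψ p')))) (dil ψ p)‖ * p.1 ^ ((n:ℝ)/2)) ∂(lamMeas n))
      ≤ ∫⁻ p in Sset, G1 p ∂(lamMeas n) := by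
    refine lintegral_mono_ae ?_
    filter_upwards [ae_restrict_of_ae (lam_ae_pos n)] with p hp
    exact ENNReal.ofReal_le_ofReal
      (mul_le_mul_of_nonneg_right (hbd p p' hp hp') (Real.rpow_nonneg hp.le _))
  refine le_trans step1 ?_
  have step2 : ∫⁻ p in Sset, G1 p ∂(lamMeas n)
      = ∫⁻ q, Sset.indicator G1 (Φ q) ∂(lamMeas n) := by
    rw [← lintegral_indicator hSm]
    exact (lam_comp n hp' p'.2 (Sset.indicator G1) (hG1m.indicator hSm)).symm
  rw [step2]
  have step3 : ∫⁻ q, Sset.indicator G1 (Φ q) ∂(lamMeas n)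
      = ∫⁻ q, (Φ ⁻¹' Sset).indicator
          (fun q => ENNReal.ofReal (p'.1 ^ ((n:ℝ)/2)) * F q) q ∂(lamMeas n) := by
    refine lintegral_congr_ae ?_
    filter_upwards [lam_ae_pos n] with q hq
    by_cases hmem : Φ q ∈ Sset
    · rw [Set.indicator_of_mem hmem, Set.indicator_of_mem (Set.mem_preimage.mpr hmem)]
      have e1 : (Φ q).1 / p'.1 = q.1 := by
        rw [hΦ]; exact mul_div_cancel_left₀ _ hp'.ne'
      have e2 : (p'.1)⁻¹ • ((Φ q).2 - p'.2) = q.2 := by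
        rw [hΦ]
        simp only [add_sub_cancel_left, smul_smul, inv_mul_cancel₀ hp'.ne', one_smul]
      have e3 : (Φ q).1 ^ ((n:ℝ)/2) = p'.1 ^ ((n:ℝ)/2) * q.1 ^ ((n:ℝ)/2) := by
        rw [hΦ]; exact Real.mul_rpow hp'.le hq.le
      rw [hG1, hFdef]
      simp only []
      rw [e1, e2, e3, show C₀ * Gfun n δ (q.1, q.2) * (p'.1 ^ ((n:ℝ)/2) * q.1 ^ ((n:ℝ)/2))
          = p'.1 ^ ((n:ℝ)/2) * (C₀ * Gfun n δ (q.1, q.2) * q.1 ^ ((n:ℝ)/2)) by ring,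
        ENNReal.ofReal_mul (Real.rpow_nonneg hp'.le _)]
    · rw [Set.indicator_of_notMem hmem,
        Set.indicator_of_notMem (fun h => hmem (Set.mem_preimage.mp h))]
  rw [step3]
  rw [lintegral_indicator (hΦm hSm)]
  rw [lintegral_const_mul _ hFm]

end Master

section Assemble

open scoped Topology

lemma loc_half (n : ℕ) {δ C₀ : ℝ} (hδ : 0 < δ) (hC₀ : 0 < C₀) (ψ : Euc n → ℂ)
    (S : L2 n →L[ℂ] L2 n)
    (hbd : ∀ p p' : ℝ × Euc n, 0 < p.1 → 0 < p'.1 →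
      ‖pairing (⇑(S (toL2 (dil ψ p')))) (dil ψ p)‖
        ≤ C₀ * Gfun n δ (p.1 / p'.1, (p'.1)⁻¹ • (p.2 - p'.2))) :
    SchurBound ψ S (fun p => p.1 ^ ((n:ℝ)/2)) ∧ LocDecay ψ S (fun p => p.1 ^ ((n:ℝ)/2)) := by
  set F : ℝ × Euc n → ℝ≥0∞ := fun q =>
    ENNReal.ofReal (C₀ * Gfun n δ q * q.1 ^ ((n:ℝ)/2)) with hFdef
  have hFm : Measurable F :=
    ((measurable_const.mul (measurable_Gfun n δ)).mul
      ((measurable_rpow_const _).comp measurable_fst)).ennreal_ofReal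
  have hIfull : ∫⁻ q, F q ∂(lamMeas n) < ⊤ := Ifull_lt_top n hδ hC₀
  constructor
  · refine ⟨(∫⁻ q, F q ∂(lamMeas n)).toReal, fun p' hp' => ?_⟩
    have h := master n hδ hC₀ ψ S hbd hp' (Sset := Set.univ) MeasurableSet.univ
    rw [Measure.restrict_univ, Set.preimage_univ, Measure.restrict_univ] at h
    refine le_trans h ?_
    rw [ENNReal.ofReal_mul ENNReal.toReal_nonneg, ENNReal.ofReal_toReal hIfull.ne]
    exact le_of_eq (mul_comm _ _)
  · intro ε hε
    set ν : Measure (ℝ × Euc n) := (lamMeas n).withDensity F with hν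
    have hνset : ∀ (s : Set (ℝ × Euc n)), MeasurableSet s → ν s = ∫⁻ q in s, F q ∂(lamMeas n) :=
      fun s hs => withDensity_apply F hs
    have hνtop : ν Set.univ ≠ ⊤ := by
      rw [hνset _ MeasurableSet.univ, Measure.restrict_univ]
      exact hIfull.ne
    have hanti : Antitone (fun k : ℕ => farFrom (basePt n) (k:ℝ)) := by
      intro k l hkl p hp
      exact ⟨hp.1, le_trans (by exact_mod_cast Nat.cast_le.mpr hkl) hp.2⟩
    have hempty : ⋂ k : ℕ, farFrom (basePt n) (k:ℝ) = ∅ := by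
      ext p
      simp only [Set.mem_iInter, Set.mem_empty_iff_false, iff_false, not_forall]
      obtain ⟨k, hk⟩ := exists_nat_gt (hypDist (basePt n) p)
      exact ⟨k, fun hmem => absurd hmem.2 (not_le.mpr hk)⟩
    have htend : Filter.Tendsto (fun k : ℕ => ν (farFrom (basePt n) (k:ℝ)))
        Filter.atTop (𝓝 0) := by
      have h0 := tendsto_measure_iInter_atTop (μ := ν)
        (s := fun k : ℕ => farFrom (basePt n) (k:ℝ))
        (fun k => (measurableSet_farFrom (basePt n) (k:ℝ)).nullMeasurableSet) hanti
        ⟨0, ne_top_of_le_ne_top hνtop (measure_mono (Set.subset_univ _))⟩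
      rw [hempty, measure_empty] at h0
      exact h0
    have hev := htend.eventually_lt_const (ENNReal.ofReal_pos.mpr hε)
    obtain ⟨k, hk⟩ := hev.exists
    refine ⟨(k:ℝ), fun p' hp' => ?_⟩
    have h := master n hδ hC₀ ψ S hbd hp' (Sset := farFrom p' (k:ℝ))
      (measurableSet_farFrom p' (k:ℝ))
    rw [farFrom_preimage n hp' (k:ℝ)] at h
    refine le_trans h ?_
    rw [← hνset _ (measurableSet_farFrom (basePt n) (k:ℝ))]
    calc ENNReal.ofReal (p'.1 ^ ((n:ℝ)/2)) * ν (farFrom (basePt n) (k:ℝ))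
        ≤ ENNReal.ofReal (p'.1 ^ ((n:ℝ)/2)) * ENNReal.ofReal ε := mul_le_mul_right hk.le _
      _ = ENNReal.ofReal (ε * p'.1 ^ ((n:ℝ)/2)) := by
          rw [← ENNReal.ofReal_mul (Real.rpow_nonneg hp'.le _), mul_comm]

end Assemble

/-- Theorem 4.2, abstract form: the matrix coefficient bounds of Lemma 4.1
for T and T* imply that T is localized with weight w(a,b) = a^{n/2}. -/
theorem statement9 (n : ℕ) (hn : 1 ≤ n) (δ C₀ : ℝ) (hδ : 0 < δ) (hC₀ : 0 < C₀)
    (ψ : Euc n → ℂ) (hψ : MemLp ψ 2 (volume : Measure (Euc n)))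
    (T : L2 n →L[ℂ] L2 n)
    (hbd : ∀ p p' : ℝ × Euc n, 0 < p.1 → 0 < p'.1 →
      ‖pairing (⇑(T (toL2 (dil ψ p')))) (dil ψ p)‖
        ≤ C₀ * Gfun n δ (p.1 / p'.1, (p'.1)⁻¹ • (p.2 - p'.2)))
    (hbdAdj : ∀ p p' : ℝ × Euc n, 0 < p.1 → 0 < p'.1 →
      ‖pairing (⇑((ContinuousLinearMap.adjoint T) (toL2 (dil ψ p')))) (dil ψ p)‖
        ≤ C₀ * Gfun n δ (p.1 / p'.1, (p'.1)⁻¹ • (p.2 - p'.2))) :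
    Localized ψ T (fun p => p.1 ^ ((n : ℝ) / 2)) := by
  obtain ⟨h1, h3⟩ := loc_half n hδ hC₀ ψ T hbd
  obtain ⟨h2, h4⟩ := loc_half n hδ hC₀ ψ (ContinuousLinearMap.adjoint T) hbdAdj
  exact ⟨h1, h2, h3, h4⟩

end
end

section
/- Let n ≥ 1, C_K > 0, δ > 0, and let K be a Calderón–Zygmund kernel on ℝⁿ with constants C_K and δ. Let ψ : ℝⁿ → ℂ be measurable with supp ψ ⊆ B(0,1), |ψ| ≤ 1 everywhere, and ∫_{ℝⁿ} ψ = 0. There is a constant C depending only on n and δ such that for all a ≥ 1 and b ∈ ℝⁿ with |b| ≥ 2(a+1), the absolutely convergent integral I(a,b) := ∫_{ℝⁿ}∫_{ℝⁿ} K(x,y) ψ(y) \overline{ψ_{(a,b)}(x)} dy dx satisfies |I(a,b)| ≤ C · C_K · a^{n/2} |b|^{−(n+δ)}. -/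
open MeasureTheory Metric Set
open scoped ENNReal

noncomputable section

/-- A CZ kernel is jointly continuous off the diagonal. -/
lemma cz_continuousOn {n : ℕ} {K : Euc n → Euc n → ℂ} {CK δ : ℝ} (hδ : 0 < δ)
    (hCK : 0 ≤ CK) (hK : IsCZKernel n K CK δ) :
    ContinuousOn (fun q : Euc n × Euc n => K q.1 q.2) {q | q.1 ≠ q.2} := by
  intro p₀ hp₀
  have hd : 0 < ‖p₀.1 - p₀.2‖ := by
    rw [norm_pos_iff, sub_ne_zero]; exact hp₀
  set d : ℝ := ‖p₀.1 - p₀.2‖ with hdd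
  have hexp : -((n : ℝ) + δ) ≤ 0 := neg_nonpos.2 (by positivity)
  have key : ∀ q : Euc n × Euc n, ‖q.1 - p₀.1‖ < d / 4 → ‖q.2 - p₀.2‖ < d / 4 →
      ‖K q.1 q.2 - K p₀.1 p₀.2‖ ≤
        CK * (d / 2) ^ (-((n : ℝ) + δ)) * (‖q.1 - p₀.1‖ ^ δ + ‖q.2 - p₀.2‖ ^ δ) := by
    intro q h1 h2
    have htri : d ≤ ‖q.1 - p₀.1‖ + ‖q.1 - q.2‖ + ‖q.2 - p₀.2‖ := by
      have h := dist_triangle4 p₀.1 q.1 q.2 p₀.2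
      rw [dist_eq_norm, dist_eq_norm, dist_eq_norm, dist_eq_norm] at h
      rw [norm_sub_rev p₀.1 q.1] at h
      exact h
    have hq12 : d / 2 ≤ ‖q.1 - q.2‖ := by linarith
    have hx0y : 3 * d / 4 ≤ ‖p₀.1 - q.2‖ := by
      have h := dist_triangle p₀.1 q.2 p₀.2
      rw [dist_eq_norm, dist_eq_norm, dist_eq_norm] at h
      linarith
    have t1 : ‖K q.1 q.2 - K p₀.1 q.2‖ ≤
        CK * (d / 2) ^ (-((n : ℝ) + δ)) * ‖q.1 - p₀.1‖ ^ δ := by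
      by_cases hx : q.1 = p₀.1
      · simp [hx, Real.zero_rpow hδ.ne']
      · have hcond : ‖q.1 - p₀.1‖ ≤ ‖q.2 - q.1‖ / 2 := by
          rw [norm_sub_rev q.2 q.1]; linarith
        have hb := hK.2.2 q.2 q.1 p₀.1 hx hcond
        have hmono : ‖q.2 - q.1‖ ^ (-((n : ℝ) + δ)) ≤ (d / 2) ^ (-((n : ℝ) + δ)) :=
          Real.rpow_le_rpow_of_nonpos (by positivity)
            (by rw [norm_sub_rev]; exact hq12) hexp
        calc ‖K q.1 q.2 - K p₀.1 q.2‖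
            ≤ CK * ‖q.1 - p₀.1‖ ^ δ * ‖q.2 - q.1‖ ^ (-((n : ℝ) + δ)) := hb
          _ ≤ CK * ‖q.1 - p₀.1‖ ^ δ * (d / 2) ^ (-((n : ℝ) + δ)) := by
              apply mul_le_mul_of_nonneg_left hmono (by positivity)
          _ = CK * (d / 2) ^ (-((n : ℝ) + δ)) * ‖q.1 - p₀.1‖ ^ δ := by ring
    have t2 : ‖K p₀.1 q.2 - K p₀.1 p₀.2‖ ≤
        CK * (d / 2) ^ (-((n : ℝ) + δ)) * ‖q.2 - p₀.2‖ ^ δ := by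
      by_cases hy : q.2 = p₀.2
      · simp [hy, Real.zero_rpow hδ.ne']
      · have hcond : ‖q.2 - p₀.2‖ ≤ ‖p₀.1 - q.2‖ / 2 := by linarith
        have hb := hK.2.1 p₀.1 q.2 p₀.2 hy hcond
        have hmono : ‖p₀.1 - q.2‖ ^ (-((n : ℝ) + δ)) ≤ (d / 2) ^ (-((n : ℝ) + δ)) :=
          Real.rpow_le_rpow_of_nonpos (by positivity) (by linarith) hexp
        calc ‖K p₀.1 q.2 - K p₀.1 p₀.2‖
            ≤ CK * ‖q.2 - p₀.2‖ ^ δ * ‖p₀.1 - q.2‖ ^ (-((n : ℝ) + δ)) := hb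
          _ ≤ CK * ‖q.2 - p₀.2‖ ^ δ * (d / 2) ^ (-((n : ℝ) + δ)) := by
              apply mul_le_mul_of_nonneg_left hmono (by positivity)
          _ = CK * (d / 2) ^ (-((n : ℝ) + δ)) * ‖q.2 - p₀.2‖ ^ δ := by ring
    calc ‖K q.1 q.2 - K p₀.1 p₀.2‖
        ≤ ‖K q.1 q.2 - K p₀.1 q.2‖ + ‖K p₀.1 q.2 - K p₀.1 p₀.2‖ :=
          norm_sub_le_norm_sub_add_norm_sub _ _ _
      _ ≤ CK * (d / 2) ^ (-((n : ℝ) + δ)) * (‖q.1 - p₀.1‖ ^ δ + ‖q.2 - p₀.2‖ ^ δ) := by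
          rw [mul_add]; exact add_le_add t1 t2
  have c1 : Filter.Tendsto (fun q : Euc n × Euc n => ‖q.1 - p₀.1‖) (nhds p₀) (nhds 0) := by
    have hc : Continuous (fun q : Euc n × Euc n => ‖q.1 - p₀.1‖) :=
      (continuous_fst.sub continuous_const).norm
    have := hc.tendsto p₀
    simpa using this
  have c2 : Filter.Tendsto (fun q : Euc n × Euc n => ‖q.2 - p₀.2‖) (nhds p₀) (nhds 0) := by
    have hc : Continuous (fun q : Euc n × Euc n => ‖q.2 - p₀.2‖) :=
      (continuous_snd.sub continuous_const).norm
    have := hc.tendsto p₀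
    simpa using this
  have hW : ∀ᶠ q : Euc n × Euc n in nhds p₀,
      ‖q.1 - p₀.1‖ < d / 4 ∧ ‖q.2 - p₀.2‖ < d / 4 :=
    (c1.eventually_lt_const (by positivity)).and (c2.eventually_lt_const (by positivity))
  have hA : Filter.Tendsto (fun q : Euc n × Euc n => ‖q.1 - p₀.1‖ ^ δ) (nhds p₀) (nhds 0) := by
    have := (Real.continuousAt_rpow_const 0 δ (Or.inr hδ.le)).tendsto.comp c1
    simpa [Function.comp_def, Real.zero_rpow hδ.ne'] using this
  have hB : Filter.Tendsto (fun q : Euc n × Euc n => ‖q.2 - p₀.2‖ ^ δ) (nhds p₀) (nhds 0) := by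
    have := (Real.continuousAt_rpow_const 0 δ (Or.inr hδ.le)).tendsto.comp c2
    simpa [Function.comp_def, Real.zero_rpow hδ.ne'] using this
  have hg0 : Filter.Tendsto
      (fun q : Euc n × Euc n =>
        CK * (d / 2) ^ (-((n : ℝ) + δ)) * (‖q.1 - p₀.1‖ ^ δ + ‖q.2 - p₀.2‖ ^ δ))
      (nhds p₀) (nhds 0) := by
    have := (hA.add hB).const_mul (CK * (d / 2) ^ (-((n : ℝ) + δ)))
    simpa using this
  rw [ContinuousWithinAt]
  rw [← tendsto_sub_nhds_zero_iff]
  apply squeeze_zero_norm'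
  · exact (hW.filter_mono nhdsWithin_le_nhds).mono fun q hq => key q hq.1 hq.2
  · exact hg0.mono_left nhdsWithin_le_nhds


/-- Integrability and norm bound for a product of a continuous kernel factor and a measurable
factor vanishing outside an open set of finite measure. -/
lemma aux_bound {n : ℕ} {V : Set (Euc n × Euc n)} (hVopen : IsOpen V)
    (hVfin : volume V ≠ ⊤) {F g : Euc n × Euc n → ℂ}
    (hF : ContinuousOn F V) (hgmeas : Measurable g) (hg0 : ∀ q ∉ V, g q = 0)
    {M : ℝ} (hM : ∀ q ∈ V, ‖F q * g q‖ ≤ M) :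
    Integrable (fun q => F q * g q) (volume : Measure (Euc n × Euc n)) ∧
      ‖∫ q : Euc n × Euc n, F q * g q‖ ≤ (volume V).toReal * M := by
  have hVmeas : MeasurableSet V := hVopen.measurableSet
  have heq : (fun q => F q * g q) = fun q => V.indicator F q * g q := by
    funext q
    by_cases hq : q ∈ V
    · rw [Set.indicator_of_mem hq]
    · rw [Set.indicator_of_notMem hq, zero_mul, hg0 q hq, mul_zero]
  have hsm : AEStronglyMeasurable (fun q => F q * g q) (volume : Measure (Euc n × Euc n)) := by
    rw [heq]
    exact (((aemeasurable_indicator_iff hVmeas).2 (hF.aemeasurable hVmeas)).mul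
      hgmeas.aemeasurable).aestronglyMeasurable
  have hbound : ∀ q, ‖F q * g q‖ ≤ V.indicator (fun _ => M) q := by
    intro q
    by_cases hq : q ∈ V
    · rw [Set.indicator_of_mem hq]; exact hM q hq
    · rw [Set.indicator_of_notMem hq, hg0 q hq, mul_zero, norm_zero]
  have hbint : Integrable (V.indicator fun _ => M) (volume : Measure (Euc n × Euc n)) := by
    rw [integrable_indicator_iff hVmeas]
    exact integrableOn_const hVfin
  refine ⟨Integrable.mono' hbint hsm (Filter.Eventually.of_forall hbound), ?_⟩
  calc ‖∫ q : Euc n × Euc n, F q * g q‖ ≤ ∫ q, V.indicator (fun _ => M) q :=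
        norm_integral_le_of_norm_le hbint (Filter.Eventually.of_forall hbound)
    _ = (volume V).toReal * M := by
        rw [integral_indicator_const M hVmeas, smul_eq_mul]; rfl

/-- part of Lemma 4.1: bound |⟨Tψ, ψ_{(a,b)}⟩| ≲ C_K a^{n/2}|b|^{-(n+δ)}
for a ≥ 1 and |b| ≥ 2(a+1), when T is given by integration against a CZ kernel on disjointly
supported functions. -/
theorem statement12 (n : ℕ) (hn : 1 ≤ n) (δ : ℝ) (hδ : 0 < δ) :
    ∃ C : ℝ, 0 < C ∧
      ∀ CK : ℝ, 0 < CK → ∀ K : Euc n → Euc n → ℂ, IsCZKernel n K CK δ →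
        ∀ ψ : Euc n → ℂ, Measurable ψ → Function.support ψ ⊆ Metric.ball 0 1 →
          (∀ x : Euc n, ‖ψ x‖ ≤ 1) → (∫ x, ψ x) = 0 →
          ∀ (a : ℝ) (b : Euc n), 1 ≤ a → 2 * (a + 1) ≤ ‖b‖ →
            Integrable
              (fun q : Euc n × Euc n => K q.1 q.2 * ψ q.2 * (starRingEnd ℂ) (dil ψ (a, b) q.1))
              (volume : Measure (Euc n × Euc n)) ∧
            ‖∫ q : Euc n × Euc n, K q.1 q.2 * ψ q.2 * (starRingEnd ℂ) (dil ψ (a, b) q.1)‖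
              ≤ C * CK * a ^ ((n : ℝ) / 2) * ‖b‖ ^ (-((n : ℝ) + δ)) := by
  haveI : Nontrivial (Euc n) :=
    Module.nontrivial_of_finrank_pos (R := ℝ)
      (by rw [finrank_euclideanSpace_fin]; omega)
  set v1 : ℝ := (volume (Metric.ball (0 : Euc n) 1)).toReal with hv1def
  have hv1pos : 0 < v1 :=
    ENNReal.toReal_pos (measure_ball_pos volume 0 one_pos).ne' measure_ball_lt_top.ne
  refine ⟨2 ^ ((n : ℝ) + δ) * v1 ^ 2, by positivity, ?_⟩
  intro CK hCK K hK ψ hψmeas hψsupp hψle hψint a b ha hab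
  have ha0 : (0:ℝ) < a := lt_of_lt_of_le one_pos ha
  have hb4 : (4:ℝ) ≤ ‖b‖ := by linarith
  have hb0 : (0:ℝ) < ‖b‖ := by linarith
  have hb2 : (0:ℝ) < ‖b‖ / 2 := by linarith
  have hab2 : a + 1 ≤ ‖b‖ / 2 := by linarith
  set φ : Euc n → ℂ := dil ψ (a, b) with hφdef
  have hφnorm : ∀ x, ‖φ x‖ ≤ a ^ (-(n:ℝ)/2) := by
    intro x
    have h : ‖φ x‖ = a ^ (-(n:ℝ)/2) * ‖ψ (a⁻¹ • (x - b))‖ := by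
      rw [hφdef]; unfold dil
      rw [norm_smul, Real.norm_eq_abs, abs_of_nonneg (Real.rpow_nonneg ha0.le _)]
    rw [h]
    calc a ^ (-(n:ℝ)/2) * ‖ψ (a⁻¹ • (x - b))‖ ≤ a ^ (-(n:ℝ)/2) * 1 :=
          mul_le_mul_of_nonneg_left (hψle _) (Real.rpow_nonneg ha0.le _)
      _ = a ^ (-(n:ℝ)/2) := mul_one _
  have hφsupp : ∀ x, x ∉ Metric.ball b a → φ x = 0 := by
    intro x hx
    have h : ψ (a⁻¹ • (x - b)) = 0 := by
      by_contra h
      have hmem := hψsupp (Function.mem_support.2 h)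
      rw [mem_ball_zero_iff, norm_smul, norm_inv, Real.norm_eq_abs, abs_of_pos ha0] at hmem
      apply hx
      rw [Metric.mem_ball, dist_eq_norm]
      calc ‖x - b‖ = a * (a⁻¹ * ‖x - b‖) := by field_simp
        _ < a * 1 := mul_lt_mul_of_pos_left hmem ha0
        _ = a := mul_one a
    rw [hφdef]; unfold dil; simp [h]
  have hfar : ∀ x ∈ Metric.ball b a, ∀ y ∈ Metric.ball (0:Euc n) 1, ‖b‖ / 2 ≤ ‖x - y‖ := by
    intro x hx y hy
    rw [Metric.mem_ball, dist_eq_norm] at hx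
    rw [mem_ball_zero_iff] at hy
    have h := dist_triangle4 b x y 0
    rw [dist_eq_norm, dist_eq_norm, dist_eq_norm, dist_eq_norm, sub_zero, sub_zero,
      norm_sub_rev b x] at h
    linarith
  set V : Set (Euc n × Euc n) := (Metric.ball b a) ×ˢ (Metric.ball (0:Euc n) 1) with hVdef
  have hVopen : IsOpen V := Metric.isOpen_ball.prod Metric.isOpen_ball
  have hVsub : V ⊆ {q : Euc n × Euc n | q.1 ≠ q.2} := by
    rintro ⟨x, y⟩ ⟨hx, hy⟩
    have h := hfar x hx y hy
    simp only [Set.mem_setOf_eq]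
    intro hxy
    rw [hxy, sub_self, norm_zero] at h; linarith
  have hVvol : volume V = volume (Metric.ball b a) * volume (Metric.ball (0:Euc n) 1) := by
    rw [hVdef, Measure.volume_eq_prod, Measure.prod_prod]
  have hVfin : volume V ≠ ⊤ := by
    rw [hVvol]
    exact (ENNReal.mul_lt_top measure_ball_lt_top measure_ball_lt_top).ne
  set g : Euc n × Euc n → ℂ := fun q => ψ q.2 * (starRingEnd ℂ) (φ q.1) with hgdef
  have hφmeas : Measurable φ := by
    rw [hφdef]; unfold dil
    have hc : Measurable fun x : Euc n => a⁻¹ • (x - b) :=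
      (by fun_prop : Continuous fun x : Euc n => a⁻¹ • (x - b)).measurable
    exact (hψmeas.comp hc).const_smul (a ^ (-(n:ℝ)/2) : ℝ)
  have hgmeas : Measurable g :=
    (hψmeas.comp measurable_snd).mul
      (continuous_star.measurable.comp (hφmeas.comp measurable_fst))
  have hg0 : ∀ q : Euc n × Euc n, q ∉ V → g q = 0 := by
    intro q hq
    rw [hVdef, Set.mem_prod] at hq
    by_cases h1 : q.1 ∈ Metric.ball b a
    · have h2 : q.2 ∉ Metric.ball (0:Euc n) 1 := fun h => hq ⟨h1, h⟩
      have hz : ψ q.2 = 0 := by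
        by_contra h; exact h2 (hψsupp (Function.mem_support.2 h))
      rw [hgdef]; simp [hz]
    · rw [hgdef]; simp [hφsupp q.1 h1]
  have hgnorm : ∀ q : Euc n × Euc n, ‖g q‖ ≤ a ^ (-(n:ℝ)/2) := by
    intro q
    rw [hgdef]
    calc ‖ψ q.2 * (starRingEnd ℂ) (φ q.1)‖ = ‖ψ q.2‖ * ‖φ q.1‖ := by
          rw [norm_mul, RCLike.norm_conj]
      _ ≤ 1 * (a ^ (-(n:ℝ)/2)) :=
          mul_le_mul (hψle _) (hφnorm _) (norm_nonneg _) zero_le_one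
      _ = a ^ (-(n:ℝ)/2) := one_mul _
  have hKcont := cz_continuousOn hδ hCK.le hK
  -- integrability and bound for the plain integrand
  have haux1 := aux_bound (F := fun q : Euc n × Euc n => K q.1 q.2)
      (M := CK * (‖b‖/2) ^ (-(n:ℝ)) * a ^ (-(n:ℝ)/2))
      hVopen hVfin (hKcont.mono hVsub) hgmeas hg0 ?hM1
  case hM1 =>
    rintro ⟨x, y⟩ ⟨hx, hy⟩
    have hxy : ‖b‖/2 ≤ ‖x - y‖ := hfar x hx y hy
    have hne : x ≠ y := hVsub ⟨hx, hy⟩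
    have hKb : ‖K x y‖ ≤ CK * (‖b‖/2) ^ (-(n:ℝ)) := by
      calc ‖K x y‖ ≤ CK * ‖x - y‖ ^ (-(n:ℝ)) := hK.1 x y hne
        _ ≤ CK * (‖b‖/2) ^ (-(n:ℝ)) :=
            mul_le_mul_of_nonneg_left
              (Real.rpow_le_rpow_of_nonpos hb2 hxy (neg_nonpos.2 (Nat.cast_nonneg n))) hCK.le
    calc ‖K x y * g (x, y)‖ = ‖K x y‖ * ‖g (x, y)‖ := norm_mul _ _
      _ ≤ (CK * (‖b‖/2) ^ (-(n:ℝ))) * (a ^ (-(n:ℝ)/2)) :=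
          mul_le_mul hKb (hgnorm _) (norm_nonneg _) (by positivity)
  -- integrability and bound for the cancelled integrand
  have hcont0 : ContinuousOn (fun q : Euc n × Euc n => K q.1 q.2 - K q.1 0) V := by
    apply (hKcont.mono hVsub).sub
    apply hKcont.comp (Continuous.continuousOn (by continuity :
      Continuous fun q : Euc n × Euc n => (q.1, (0 : Euc n))))
    rintro ⟨x, y⟩ ⟨hx, _⟩
    have h := hfar x hx 0 (by simp [Metric.mem_ball])
    simp only [Set.mem_setOf_eq]
    intro hx0
    rw [hx0] at h; simp at h; linarith
  have haux0 := aux_bound (F := fun q : Euc n × Euc n => K q.1 q.2 - K q.1 0)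
      (M := CK * (‖b‖/2) ^ (-((n:ℝ) + δ)) * a ^ (-(n:ℝ)/2))
      hVopen hVfin hcont0 hgmeas hg0 ?hM0
  case hM0 =>
    rintro ⟨x, y⟩ ⟨hx, hy⟩
    have hxy : ‖b‖/2 ≤ ‖x - y‖ := hfar x hx y hy
    by_cases hy0 : y = 0
    · simp only [hy0, sub_self, zero_mul, norm_zero]
      positivity
    · have hylt : ‖y‖ < 1 := mem_ball_zero_iff.1 hy
      have hcond : ‖y - 0‖ ≤ ‖x - y‖ / 2 := by
        rw [sub_zero]; linarith
      have hb := hK.2.1 x y 0 hy0 hcond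
      have hKb : ‖K x y - K x 0‖ ≤ CK * (‖b‖/2) ^ (-((n:ℝ) + δ)) := by
        calc ‖K x y - K x 0‖ ≤ CK * ‖y - 0‖ ^ δ * ‖x - y‖ ^ (-((n:ℝ) + δ)) := hb
          _ ≤ CK * 1 * (‖b‖/2) ^ (-((n:ℝ) + δ)) := by
              apply mul_le_mul
              · exact mul_le_mul_of_nonneg_left
                  (Real.rpow_le_one (norm_nonneg _) (by rw [sub_zero]; exact hylt.le) hδ.le)
                  hCK.le
              · exact Real.rpow_le_rpow_of_nonpos hb2 hxy (neg_nonpos.2 (by positivity))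
              · positivity
              · positivity
          _ = CK * (‖b‖/2) ^ (-((n:ℝ) + δ)) := by rw [mul_one]
      calc ‖(K x y - K x 0) * g (x, y)‖ = ‖K x y - K x 0‖ * ‖g (x, y)‖ := norm_mul _ _
        _ ≤ (CK * (‖b‖/2) ^ (-((n:ℝ) + δ))) * (a ^ (-(n:ℝ)/2)) :=
            mul_le_mul hKb (hgnorm _) (norm_nonneg _) (by positivity)
  -- shape conversion
  have hshape : (fun q : Euc n × Euc n => K q.1 q.2 * ψ q.2 * (starRingEnd ℂ) (φ q.1)) =
      fun q : Euc n × Euc n => (fun q : Euc n × Euc n => K q.1 q.2) q * g q := by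
    funext q; rw [hgdef]; ring
  constructor
  · rw [hshape]; exact haux1.1
  -- cancellation: the two integrals agree
  have hdiff : (fun q : Euc n × Euc n =>
        (fun q : Euc n × Euc n => K q.1 q.2) q * g q -
        (fun q : Euc n × Euc n => K q.1 q.2 - K q.1 0) q * g q) =
      fun z : Euc n × Euc n => (K z.1 0 * (starRingEnd ℂ) (φ z.1)) * ψ z.2 := by
    funext z; rw [hgdef]; ring
  have hzero : ∫ q : Euc n × Euc n,
      ((fun q : Euc n × Euc n => K q.1 q.2) q * g q -
       (fun q : Euc n × Euc n => K q.1 q.2 - K q.1 0) q * g q) = 0 := by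
    rw [hdiff, Measure.volume_eq_prod,
      integral_prod_mul (fun x : Euc n => K x 0 * (starRingEnd ℂ) (φ x)) ψ, hψint, mul_zero]
  have hIeq : (∫ q : Euc n × Euc n, (fun q : Euc n × Euc n => K q.1 q.2) q * g q) =
      ∫ q : Euc n × Euc n, (fun q : Euc n × Euc n => K q.1 q.2 - K q.1 0) q * g q := by
    have h2 := integral_sub haux1.1 haux0.1
    exact sub_eq_zero.1 (h2.symm.trans hzero)
  -- volume computation
  have hball : volume (Metric.ball b a) =
      ENNReal.ofReal (a ^ n) * volume (Metric.ball (0:Euc n) 1) := by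
    have h := Measure.addHaar_ball (volume : Measure (Euc n)) b ha0.le
    rwa [finrank_euclideanSpace_fin] at h
  have hvolV : (volume V).toReal = a ^ n * v1 * v1 := by
    rw [hVvol, hball, ENNReal.toReal_mul, ENNReal.toReal_mul,
      ENNReal.toReal_ofReal (by positivity)]
  -- exponent arithmetic
  have e1 : (‖b‖/2 : ℝ) ^ (-((n:ℝ) + δ)) = ‖b‖ ^ (-((n:ℝ) + δ)) * 2 ^ ((n:ℝ) + δ) := by
    rw [Real.div_rpow (norm_nonneg b) (by norm_num : (0:ℝ) ≤ 2), div_eq_mul_inv,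
      ← Real.rpow_neg (by norm_num : (0:ℝ) ≤ 2), neg_neg]
  have e2 : (a : ℝ) ^ (n:ℕ) * a ^ (-(n:ℝ)/2) = a ^ ((n:ℝ)/2) := by
    rw [← Real.rpow_natCast a n, ← Real.rpow_add ha0]
    congr 1; ring
  have hfinal : (volume V).toReal * (CK * (‖b‖/2) ^ (-((n:ℝ) + δ)) * a ^ (-(n:ℝ)/2)) =
      2 ^ ((n:ℝ) + δ) * v1 ^ 2 * CK * a ^ ((n:ℝ)/2) * ‖b‖ ^ (-((n:ℝ) + δ)) := by
    rw [hvolV, e1, ← e2]; ring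
  calc ‖∫ q : Euc n × Euc n, K q.1 q.2 * ψ q.2 * (starRingEnd ℂ) (φ q.1)‖
      = ‖∫ q : Euc n × Euc n, (fun q : Euc n × Euc n => K q.1 q.2 - K q.1 0) q * g q‖ := by
        rw [hshape, hIeq]
    _ ≤ (volume V).toReal * (CK * (‖b‖/2) ^ (-((n:ℝ) + δ)) * a ^ (-(n:ℝ)/2)) := haux0.2
    _ = 2 ^ ((n:ℝ) + δ) * v1 ^ 2 * CK * a ^ ((n:ℝ)/2) * ‖b‖ ^ (-((n:ℝ) + δ)) := hfinal


end
end

section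
/- Let n ≥ 1, C_K > 0, δ > 0, and let K be a Calderón–Zygmund kernel on ℝⁿ with constants C_K and δ. Let ψ : ℝⁿ → ℂ be measurable with supp ψ ⊆ B(0,1), |ψ| ≤ 1 everywhere, and ∫_{ℝⁿ} ψ = 0. There is a constant C depending only on n and δ such that for all 0 < a ≤ 1 and b ∈ ℝⁿ with |b| ≥ 4, the absolutely convergent integral I(a,b) := ∫_{ℝⁿ}∫_{ℝⁿ} K(x,y) ψ(y) \overline{ψ_{(a,b)}(x)} dy dx satisfies |I(a,b)| ≤ C · C_K · a^{n/2+δ} |b|^{−(n+δ)}. -/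
open MeasureTheory Metric Set
open scoped ENNReal

noncomputable section

section Aux

variable {α : Type*} [MeasurableSpace α] {μ : Measure α} {f : α → ℂ} {s : Set α} {M : ℝ}

private lemma integrable_aux (hf : AEStronglyMeasurable f μ) (hs : MeasurableSet s)
    (hμ : μ s ≠ ⊤) (h0 : ∀ x ∉ s, f x = 0) (hM : ∀ x ∈ s, ‖f x‖ ≤ M) :
    Integrable f μ := by
  refine Integrable.mono'
    ((integrableOn_const (C := M) hμ).integrable_indicator hs) hf ?_
  filter_upwards with x
  by_cases hx : x ∈ s
  · simpa [Set.indicator_of_mem hx] using hM x hx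
  · simp [Set.indicator_of_notMem hx, h0 x hx]

private lemma norm_integral_aux (hf : Integrable f μ) (hs : MeasurableSet s)
    (hμ : μ s ≠ ⊤) (h0 : ∀ x ∉ s, f x = 0) (hM : ∀ x ∈ s, ‖f x‖ ≤ M) :
    ‖∫ x, f x ∂μ‖ ≤ M * (μ s).toReal := by
  calc ‖∫ x, f x ∂μ‖ ≤ ∫ x, ‖f x‖ ∂μ := norm_integral_le_integral_norm f
    _ ≤ ∫ x, s.indicator (fun _ => M) x ∂μ := by
        refine integral_mono hf.norm
          ((integrableOn_const (C := M) hμ).integrable_indicator hs) ?_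
        intro x
        by_cases hx : x ∈ s
        · simpa [Set.indicator_of_mem hx] using hM x hx
        · simp [Set.indicator_of_notMem hx, h0 x hx]
    _ = M * (μ s).toReal := by
        rw [integral_indicator_const _ hs, smul_eq_mul, mul_comm, measureReal_def]

end Aux

set_option maxHeartbeats 1000000 in
/-- part of Lemma 4.1: bound |⟨Tψ, ψ_{(a,b)}⟩| ≲ C_K a^{n/2+δ}|b|^{-(n+δ)}
for 0 < a ≤ 1 and |b| ≥ 4, when T is given by integration against a CZ kernel on disjointly
supported functions. -/
theorem statement13 (n : ℕ) (hn : 1 ≤ n) (δ : ℝ) (hδ : 0 < δ) :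
    ∃ C : ℝ, 0 < C ∧
      ∀ CK : ℝ, 0 < CK → ∀ K : Euc n → Euc n → ℂ, IsCZKernel n K CK δ →
        ∀ ψ : Euc n → ℂ, Measurable ψ → Function.support ψ ⊆ Metric.ball 0 1 →
          (∀ x : Euc n, ‖ψ x‖ ≤ 1) → (∫ x, ψ x) = 0 →
          ∀ (a : ℝ) (b : Euc n), 0 < a → a ≤ 1 → 4 ≤ ‖b‖ →
            Integrable
              (fun q : Euc n × Euc n => K q.1 q.2 * ψ q.2 * (starRingEnd ℂ) (dil ψ (a, b) q.1))
              (volume : Measure (Euc n × Euc n)) ∧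
            ‖∫ q : Euc n × Euc n, K q.1 q.2 * ψ q.2 * (starRingEnd ℂ) (dil ψ (a, b) q.1)‖
              ≤ C * CK * a ^ ((n : ℝ) / 2 + δ) * ‖b‖ ^ (-((n : ℝ) + δ)) := by
  haveI : Nonempty (Fin n) := ⟨⟨0, hn⟩⟩
  haveI : Nontrivial (Euc n) := ⟨0, EuclideanSpace.single ⟨0, hn⟩ (1:ℝ), by
    intro h
    have := congrArg (fun v : Euc n => v ⟨0, hn⟩) h.symm
    simp [EuclideanSpace.single_apply] at this⟩
  set V : ℝ := (volume (Metric.ball (0 : Euc n) 1)).toReal with hV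
  have hVpos : 0 < V := ENNReal.toReal_pos
    (measure_ball_pos volume (0 : Euc n) one_pos).ne' measure_ball_lt_top.ne
  refine ⟨2 ^ ((n : ℝ) + δ) * V ^ 2, by positivity, ?_⟩
  intro CK hCK K hK ψ hψm hψs hψ1 hψ0 a b ha ha1 hb
  obtain ⟨hK1, hK2, hK3⟩ := hK
  set φ : Euc n → ℂ := dil ψ (a, b) with hφ
  have hψz : ∀ z : Euc n, z ∉ Metric.ball (0 : Euc n) 1 → ψ z = 0 := by
    intro z hz
    by_contra h
    exact hz (hψs (Function.mem_support.2 h))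
  -- Geometric facts
  have key : ∀ x ∈ Metric.ball b a, ∀ y ∈ Metric.ball (0 : Euc n) 1,
      ‖b‖ - 2 < ‖x - y‖ := by
    intro x hx y hy
    rw [Metric.mem_ball, dist_eq_norm] at hx
    rw [mem_ball_zero_iff] at hy
    have h1 : ‖x‖ - ‖y‖ ≤ ‖x - y‖ := norm_sub_norm_le x y
    have h2 : ‖b‖ ≤ ‖x‖ + ‖b - x‖ := by
      have := norm_add_le x (b - x)
      simpa using this
    have h3 : ‖b - x‖ = ‖x - b‖ := norm_sub_rev b x
    linarith
  -- The open set where K is continuous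
  set U : Set (Euc n × Euc n) := {q | 2 < ‖q.1 - q.2‖} with hU
  have hKcont : ContinuousOn (fun q : Euc n × Euc n => K q.1 q.2) U := by
    rw [Metric.continuousOn_iff]
    rintro ⟨x0, y0⟩ hq0 ε hε
    set r : ℝ := min (1/2) ((ε / (2*CK+1)) ^ (1/δ)) with hr
    have hrpos : 0 < r := lt_min (by norm_num) (Real.rpow_pos_of_pos (by positivity) _)
    refine ⟨r, hrpos, ?_⟩
    rintro ⟨x, y⟩ hq hdist
    simp only [hU, Set.mem_setOf_eq] at hq hq0
    rw [Prod.dist_eq] at hdist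
    have hxx0 : ‖x - x0‖ < r := by
      rw [← dist_eq_norm]; exact lt_of_le_of_lt (le_max_left _ _) hdist
    have hyy0 : ‖y - y0‖ < r := by
      rw [← dist_eq_norm]; exact lt_of_le_of_lt (le_max_right _ _) hdist
    have hrle : r ≤ 1/2 := min_le_left _ _
    have hxy1 : 1 ≤ ‖x - y‖ := by
      have h2 : ‖x0 - y0‖ ≤ ‖x0 - x‖ + ‖x - y‖ + ‖y - y0‖ := by
        have := norm_add_le (x0 - x + (x - y)) (y - y0)
        have h' := norm_add_le (x0 - x) (x - y)
        have e : x0 - x + (x - y) + (y - y0) = x0 - y0 := by abel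
        rw [e] at this
        linarith
      have h3 : ‖x0 - x‖ = ‖x - x0‖ := norm_sub_rev _ _
      linarith
    have hxy0 : 1 ≤ ‖x - y0‖ := by
      have h2 : ‖x0 - y0‖ ≤ ‖x0 - x‖ + ‖x - y0‖ := by
        have := norm_add_le (x0 - x) (x - y0)
        have e : x0 - x + (x - y0) = x0 - y0 := by abel
        rw [e] at this
        linarith
      have h3 : ‖x0 - x‖ = ‖x - x0‖ := norm_sub_rev _ _
      linarith
    have hrδ : r ^ δ ≤ ε / (2*CK+1) := by
      calc r ^ δ ≤ ((ε/(2*CK+1)) ^ (1/δ)) ^ δ :=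
            Real.rpow_le_rpow hrpos.le (min_le_right _ _) hδ.le
        _ = ε/(2*CK+1) := by
            rw [← Real.rpow_mul (by positivity), one_div_mul_cancel hδ.ne', Real.rpow_one]
    have hA : ‖K x y - K x y0‖ ≤ CK * r ^ δ := by
      by_cases hyy : y = y0
      · simp only [hyy, sub_self, norm_zero]
        positivity
      · have hcond : ‖y - y0‖ ≤ ‖x - y‖ / 2 := by
          have : ‖y - y0‖ < 1/2 := lt_of_lt_of_le hyy0 hrle
          linarith
        have h := hK2 x y y0 hyy hcond
        have h1 : ‖x - y‖ ^ (-((n:ℝ)+δ)) ≤ 1 :=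
          Real.rpow_le_one_of_one_le_of_nonpos hxy1 (neg_nonpos.2 (by positivity))
        calc ‖K x y - K x y0‖ ≤ CK * ‖y - y0‖ ^ δ * ‖x - y‖ ^ (-((n:ℝ)+δ)) := h
          _ ≤ CK * r ^ δ * 1 := by
              apply mul_le_mul _ h1 (by positivity) (by positivity)
              exact mul_le_mul_of_nonneg_left
                (Real.rpow_le_rpow (norm_nonneg _) hyy0.le hδ.le) hCK.le
          _ = CK * r ^ δ := mul_one _
    have hB : ‖K x y0 - K x0 y0‖ ≤ CK * r ^ δ := by
      by_cases hxx : x = x0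
      · simp only [hxx, sub_self, norm_zero]
        positivity
      · have hcond : ‖x - x0‖ ≤ ‖y0 - x‖ / 2 := by
          have h1 : ‖x - x0‖ < 1/2 := lt_of_lt_of_le hxx0 hrle
          have h2 : ‖y0 - x‖ = ‖x - y0‖ := norm_sub_rev _ _
          linarith
        have h := hK3 y0 x x0 hxx hcond
        have h2 : ‖y0 - x‖ = ‖x - y0‖ := norm_sub_rev _ _
        have h1 : ‖y0 - x‖ ^ (-((n:ℝ)+δ)) ≤ 1 :=
          Real.rpow_le_one_of_one_le_of_nonpos (h2 ▸ hxy0) (neg_nonpos.2 (by positivity))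
        calc ‖K x y0 - K x0 y0‖ ≤ CK * ‖x - x0‖ ^ δ * ‖y0 - x‖ ^ (-((n:ℝ)+δ)) := h
          _ ≤ CK * r ^ δ * 1 := by
              apply mul_le_mul _ h1 (by positivity) (by positivity)
              exact mul_le_mul_of_nonneg_left
                (Real.rpow_le_rpow (norm_nonneg _) hxx0.le hδ.le) hCK.le
          _ = CK * r ^ δ := mul_one _
    have hfin : 2*CK * r ^ δ < ε := by
      have hd : (0:ℝ) < 2*CK+1 := by positivity
      have h1 : 2*CK * r ^ δ ≤ 2*CK * (ε/(2*CK+1)) :=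
        mul_le_mul_of_nonneg_left hrδ (by positivity)
      have h2 : 2*CK * (ε/(2*CK+1)) = ε * (2*CK/(2*CK+1)) := by ring
      have h3 : 2*CK/(2*CK+1) < 1 := (div_lt_one hd).2 (by linarith)
      have h4 : ε * (2*CK/(2*CK+1)) < ε := mul_lt_of_lt_one_right hε h3
      linarith
    rw [dist_eq_norm]
    have hsplit : K x y - K x0 y0 = (K x y - K x y0) + (K x y0 - K x0 y0) := by ring
    calc ‖K x y - K x0 y0‖ ≤ ‖K x y - K x y0‖ + ‖K x y0 - K x0 y0‖ := by
          rw [hsplit]; exact norm_add_le _ _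
      _ ≤ CK * r ^ δ + CK * r ^ δ := add_le_add hA hB
      _ = 2*CK * r ^ δ := by ring
      _ < ε := hfin
  -- The support set
  set S : Set (Euc n × Euc n) := Metric.ball b a ×ˢ Metric.ball (0 : Euc n) 1 with hS
  have hSmeas : MeasurableSet S := measurableSet_ball.prod measurableSet_ball
  have hSU : S ⊆ U := by
    rintro ⟨x, y⟩ ⟨hx, hy⟩
    have := key x hx y hy
    simp only [hU, Set.mem_setOf_eq]
    linarith
  have hvolS : volume S = volume (Metric.ball b a) * volume (Metric.ball (0 : Euc n) 1) := by
    rw [hS, Measure.volume_eq_prod, Measure.prod_prod]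
  have hvolS_ne : volume S ≠ ⊤ := by
    rw [hvolS]
    exact (ENNReal.mul_lt_top measure_ball_lt_top measure_ball_lt_top).ne
  -- facts about φ
  have hφmeas : Measurable φ := by
    rw [hφ]
    exact ((hψm.comp ((measurable_id.sub_const b).const_smul a⁻¹))).const_smul ((a ^ (-(n:ℝ)/2) : ℝ))
  have hφ0 : ∀ x, x ∉ Metric.ball b a → φ x = 0 := by
    intro x hx
    rw [Metric.mem_ball, dist_eq_norm, not_lt] at hx
    have hz : (a⁻¹ • (x - b)) ∉ Metric.ball (0 : Euc n) 1 := by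
      rw [mem_ball_zero_iff, not_lt, norm_smul, norm_inv, Real.norm_eq_abs, abs_of_pos ha]
      have h3 : a⁻¹ * a ≤ a⁻¹ * ‖x - b‖ := mul_le_mul_of_nonneg_left hx (inv_nonneg.2 ha.le)
      rwa [inv_mul_cancel₀ ha.ne'] at h3
    show ((a : ℝ) ^ (-(n:ℝ)/2) : ℝ) • ψ (a⁻¹ • (x - b)) = 0
    rw [hψz _ hz, smul_zero]
  have hφbd : ∀ x, ‖φ x‖ ≤ a ^ (-(n:ℝ)/2) := by
    intro x
    show ‖((a : ℝ) ^ (-(n:ℝ)/2) : ℝ) • ψ (a⁻¹ • (x - b))‖ ≤ _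
    rw [norm_smul, Real.norm_eq_abs, abs_of_pos (Real.rpow_pos_of_pos ha _)]
    calc a ^ (-(n:ℝ)/2) * ‖ψ (a⁻¹ • (x - b))‖ ≤ a ^ (-(n:ℝ)/2) * 1 :=
          mul_le_mul_of_nonneg_left (hψ1 _) (Real.rpow_pos_of_pos ha _).le
      _ = a ^ (-(n:ℝ)/2) := mul_one _
  have hφint : Integrable φ :=
    integrable_aux hφmeas.aestronglyMeasurable measurableSet_ball measure_ball_lt_top.ne
      hφ0 (fun x _ => hφbd x)
  have hφzero : (∫ x, φ x) = 0 := by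
    rw [hφ]
    show (∫ x, ((a : ℝ) ^ (-(n:ℝ)/2) : ℝ) • ψ (a⁻¹ • (x - b))) = 0
    rw [integral_smul]
    have h1 : (∫ x : Euc n, ψ (a⁻¹ • (x - b))) = ∫ x : Euc n, ψ (a⁻¹ • x) :=
      integral_sub_right_eq_self (fun x => ψ (a⁻¹ • x)) b
    rw [h1, Measure.integral_comp_smul volume ψ a⁻¹, hψ0, smul_zero, smul_zero]
  -- rest function
  have hrest0 : ∀ q : Euc n × Euc n, q ∉ S → ψ q.2 * (starRingEnd ℂ) (φ q.1) = 0 := by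
    intro q hq
    by_cases h1 : q.1 ∈ Metric.ball b a
    · have h2 : q.2 ∉ Metric.ball (0 : Euc n) 1 := fun h2 => hq ⟨h1, h2⟩
      rw [hψz _ h2, zero_mul]
    · rw [hφ0 _ h1, map_zero, mul_zero]
  have hrest_meas : Measurable (fun q : Euc n × Euc n => ψ q.2 * (starRingEnd ℂ) (φ q.1)) := by
    have h1 : Measurable (fun q : Euc n × Euc n => (starRingEnd ℂ) (φ q.1)) :=
      RCLike.continuous_conj.measurable.comp (hφmeas.comp measurable_fst)
    exact (hψm.comp measurable_snd).mul h1
  -- the integrand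
  set F : Euc n × Euc n → ℂ :=
    fun q => K q.1 q.2 * ψ q.2 * (starRingEnd ℂ) (φ q.1) with hF
  have hFeq : F = fun q => S.indicator (fun q : Euc n × Euc n => K q.1 q.2) q *
      (ψ q.2 * (starRingEnd ℂ) (φ q.1)) := by
    funext q
    by_cases hq : q ∈ S
    · simp only [Set.indicator_of_mem hq, hF]
      rw [mul_assoc]
    · simp only [Set.indicator_of_notMem hq, zero_mul, hF]
      rw [mul_assoc, hrest0 q hq, mul_zero]
  have hF_aesm : AEStronglyMeasurable F volume := by
    rw [hFeq]
    exact ((aestronglyMeasurable_indicator_iff hSmeas).2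
      (((hKcont.mono hSU)).aestronglyMeasurable hSmeas)).mul hrest_meas.aestronglyMeasurable
  have hF0 : ∀ q, q ∉ S → F q = 0 := by
    intro q hq
    simp only [hF]
    rw [mul_assoc, hrest0 q hq, mul_zero]
  have hSfacts : ∀ q : Euc n × Euc n, q ∈ S → 2 < ‖q.1 - q.2‖ ∧ q.1 ≠ q.2 := by
    rintro ⟨x, y⟩ ⟨hx, hy⟩
    have h := key x hx y hy
    have h2 : 2 < ‖x - y‖ := by linarith
    refine ⟨h2, fun he => ?_⟩
    have he' : x = y := he
    rw [he', sub_self, norm_zero] at h2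
    linarith
  have hFbd : ∀ q ∈ S, ‖F q‖ ≤ CK * a ^ (-(n:ℝ)/2) := by
    rintro ⟨x, y⟩ hq
    obtain ⟨h2, hne⟩ := hSfacts _ hq
    have hKb : ‖K x y‖ ≤ CK := by
      calc ‖K x y‖ ≤ CK * ‖x - y‖ ^ (-(n:ℝ)) := hK1 x y hne
        _ ≤ CK * 1 := mul_le_mul_of_nonneg_left
            (Real.rpow_le_one_of_one_le_of_nonpos (by linarith)
              (neg_nonpos.2 (Nat.cast_nonneg n))) hCK.le
        _ = CK := mul_one _
    show ‖K x y * ψ y * (starRingEnd ℂ) (φ x)‖ ≤ _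
    calc ‖K x y * ψ y * (starRingEnd ℂ) (φ x)‖
        = ‖K x y‖ * ‖ψ y‖ * ‖φ x‖ := by
          rw [norm_mul, norm_mul, RCLike.norm_conj]
      _ ≤ CK * 1 * a ^ (-(n:ℝ)/2) := by
          apply mul_le_mul _ (hφbd x) (norm_nonneg _) (by positivity)
          exact mul_le_mul hKb (hψ1 y) (norm_nonneg _) hCK.le
      _ = CK * a ^ (-(n:ℝ)/2) := by rw [mul_one]
  have hFint : Integrable F :=
    integrable_aux hF_aesm hSmeas hvolS_ne hF0 hFbd
  refine ⟨hFint, ?_⟩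
  -- the rank-one part
  set g : Euc n → ℂ := fun y => K b y * ψ y with hg
  set f : Euc n → ℂ := fun x => (starRingEnd ℂ) (φ x) with hf
  have hg0 : ∀ y, y ∉ Metric.ball (0 : Euc n) 1 → g y = 0 := by
    intro y hy
    show K b y * ψ y = 0
    rw [hψz _ hy, mul_zero]
  have hgcont : ContinuousOn (fun y : Euc n => K b y) (Metric.ball (0 : Euc n) 1) := by
    have hmaps : Set.MapsTo (fun y : Euc n => ((b, y) : Euc n × Euc n))
        (Metric.ball (0 : Euc n) 1) U := by
      intro y hy
      rw [mem_ball_zero_iff] at hy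
      simp only [hU, Set.mem_setOf_eq]
      have h1 : ‖b‖ - ‖y‖ ≤ ‖b - y‖ := norm_sub_norm_le b y
      linarith
    exact hKcont.comp ((continuous_const.prodMk continuous_id).continuousOn) hmaps
  have hg_aesm : AEStronglyMeasurable g volume := by
    have heq : g = fun y => (Metric.ball (0 : Euc n) 1).indicator
        (fun y : Euc n => K b y) y * ψ y := by
      funext y
      by_cases hy : y ∈ Metric.ball (0 : Euc n) 1
      · rw [Set.indicator_of_mem hy]
      · rw [Set.indicator_of_notMem hy, zero_mul, hg0 y hy]
    rw [heq]
    exact ((aestronglyMeasurable_indicator_iff measurableSet_ball).2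
      (hgcont.aestronglyMeasurable measurableSet_ball)).mul hψm.aestronglyMeasurable
  have hgbd : ∀ y ∈ Metric.ball (0 : Euc n) 1, ‖g y‖ ≤ CK := by
    intro y hy
    rw [mem_ball_zero_iff] at hy
    have hbne : b ≠ y := by
      intro h
      rw [h] at hb
      linarith
    have hby : 1 ≤ ‖b - y‖ := by
      have h1 : ‖b‖ - ‖y‖ ≤ ‖b - y‖ := norm_sub_norm_le b y
      linarith
    have hKb : ‖K b y‖ ≤ CK := by
      calc ‖K b y‖ ≤ CK * ‖b - y‖ ^ (-(n:ℝ)) := hK1 b y hbne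
        _ ≤ CK * 1 := mul_le_mul_of_nonneg_left
            (Real.rpow_le_one_of_one_le_of_nonpos hby (neg_nonpos.2 (Nat.cast_nonneg n))) hCK.le
        _ = CK := mul_one _
    calc ‖g y‖ = ‖K b y‖ * ‖ψ y‖ := norm_mul _ _
      _ ≤ CK * 1 := mul_le_mul hKb (hψ1 y) (norm_nonneg _) hCK.le
      _ = CK := mul_one _
  have hgint : Integrable g :=
    integrable_aux hg_aesm measurableSet_ball measure_ball_lt_top.ne hg0 hgbd
  have hfint : Integrable f :=
    integrable_aux ((RCLike.continuous_conj.measurable.comp hφmeas).aestronglyMeasurable)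
      measurableSet_ball measure_ball_lt_top.ne
      (fun x hx => by show (starRingEnd ℂ) (φ x) = 0; rw [hφ0 x hx, map_zero])
      (fun x _ => by
        show ‖(starRingEnd ℂ) (φ x)‖ ≤ a ^ (-(n:ℝ)/2)
        rw [RCLike.norm_conj]; exact hφbd x)
  have hPint : Integrable (fun q : Euc n × Euc n => f q.1 * g q.2) volume := by
    rw [Measure.volume_eq_prod]
    exact hfint.mul_prod hgint
  have hPzero : (∫ q : Euc n × Euc n, f q.1 * g q.2) = 0 := by
    rw [Measure.volume_eq_prod, integral_prod_mul]
    have hfz : (∫ x, f x) = 0 := by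
      show (∫ x, (starRingEnd ℂ) (φ x)) = 0
      rw [integral_conj, hφzero, map_zero]
    rw [hfz, zero_mul]
  -- the difference part
  set D : Euc n × Euc n → ℂ :=
    fun q => (K q.1 q.2 - K b q.2) * ψ q.2 * (starRingEnd ℂ) (φ q.1) with hD
  have hDeq : D = fun q => F q - f q.1 * g q.2 := by
    funext q
    rw [hD, hF, hf, hg]
    show (K q.1 q.2 - K b q.2) * ψ q.2 * (starRingEnd ℂ) (φ q.1)
      = K q.1 q.2 * ψ q.2 * (starRingEnd ℂ) (φ q.1)
        - (starRingEnd ℂ) (φ q.1) * (K b q.2 * ψ q.2)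
    ring
  have hDint : Integrable D := by
    rw [hDeq]
    exact hFint.sub hPint
  have hIeq : (∫ q, F q) = ∫ q, D q := by
    have h1 : (∫ q, D q) = (∫ q, F q) - ∫ q : Euc n × Euc n, f q.1 * g q.2 := by
      rw [hDeq]
      exact integral_sub hFint hPint
    rw [h1, hPzero, sub_zero]
  have hD0 : ∀ q, q ∉ S → D q = 0 := by
    intro q hq
    rw [hD]
    show (K q.1 q.2 - K b q.2) * ψ q.2 * (starRingEnd ℂ) (φ q.1) = 0
    rw [mul_assoc, hrest0 q hq, mul_zero]
  -- the pointwise bound on D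
  set M : ℝ := CK * a ^ δ * ((2:ℝ) ^ ((n:ℝ)+δ) * ‖b‖ ^ (-((n:ℝ)+δ))) * a ^ (-(n:ℝ)/2) with hM
  have hMnn : 0 ≤ M := by
    rw [hM]
    have : (0:ℝ) < ‖b‖ := by linarith
    positivity
  have hDbd : ∀ q ∈ S, ‖D q‖ ≤ M := by
    rintro ⟨x, y⟩ hq
    obtain ⟨hx, hy⟩ := hq
    have hxball := hx
    rw [Metric.mem_ball, dist_eq_norm] at hx
    have hxy := key x hxball y hy
    have hKdiff : ‖K x y - K b y‖ ≤
        CK * a ^ δ * ((2:ℝ) ^ ((n:ℝ)+δ) * ‖b‖ ^ (-((n:ℝ)+δ))) := by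
      by_cases hxb : x = b
      · rw [hxb, sub_self, norm_zero]
        have : (0:ℝ) < ‖b‖ := by linarith
        positivity
      · have hyx : ‖y - x‖ = ‖x - y‖ := norm_sub_rev _ _
        have hcond : ‖x - b‖ ≤ ‖y - x‖ / 2 := by
          rw [hyx]
          have h1 : ‖x - b‖ < a := hx
          linarith
        have h := hK3 y x b hxb hcond
        have e1 : ‖x - b‖ ^ δ ≤ a ^ δ :=
          Real.rpow_le_rpow (norm_nonneg _) hx.le hδ.le
        have hbpos : (0:ℝ) < ‖b‖ := by linarith
        have e2 : ‖y - x‖ ^ (-((n:ℝ)+δ)) ≤ (‖b‖/2) ^ (-((n:ℝ)+δ)) := by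
          apply Real.rpow_le_rpow_of_nonpos (by linarith) (by rw [hyx]; linarith)
          have : (0:ℝ) ≤ (n:ℝ) + δ := by positivity
          linarith
        have e3 : (‖b‖/2) ^ (-((n:ℝ)+δ)) = (2:ℝ) ^ ((n:ℝ)+δ) * ‖b‖ ^ (-((n:ℝ)+δ)) := by
          rw [Real.div_rpow (norm_nonneg b) (by norm_num : (0:ℝ) ≤ 2), div_eq_mul_inv,
            ← Real.rpow_neg (by norm_num : (0:ℝ) ≤ 2), neg_neg, mul_comm]
        calc ‖K x y - K b y‖ ≤ CK * ‖x - b‖ ^ δ * ‖y - x‖ ^ (-((n:ℝ)+δ)) := h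
          _ ≤ CK * a ^ δ * ((2:ℝ) ^ ((n:ℝ)+δ) * ‖b‖ ^ (-((n:ℝ)+δ))) := by
              rw [← e3]
              apply mul_le_mul _ e2 (Real.rpow_nonneg (norm_nonneg _) _) (by positivity)
              exact mul_le_mul_of_nonneg_left e1 hCK.le
    rw [hD]
    calc ‖(K x y - K b y) * ψ y * (starRingEnd ℂ) (φ x)‖
        = ‖K x y - K b y‖ * ‖ψ y‖ * ‖φ x‖ := by
          rw [norm_mul, norm_mul, RCLike.norm_conj]
      _ ≤ (CK * a ^ δ * ((2:ℝ) ^ ((n:ℝ)+δ) * ‖b‖ ^ (-((n:ℝ)+δ)))) * 1 * a ^ (-(n:ℝ)/2) := by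
          apply mul_le_mul _ (hφbd x) (norm_nonneg _) ?_
          · exact mul_le_mul hKdiff (hψ1 y) (norm_nonneg _)
              (le_trans (norm_nonneg _) hKdiff)
          · have hbpos : (0:ℝ) < ‖b‖ := by linarith
            positivity
      _ = M := by rw [hM]; ring
  -- assemble
  have hnorm : ‖∫ q, F q‖ ≤ M * (volume S).toReal := by
    rw [hIeq]
    exact norm_integral_aux hDint hSmeas hvolS_ne hD0 hDbd
  have hvol : (volume S).toReal = a ^ n * V * V := by
    rw [hvolS, ENNReal.toReal_mul, ← hV]
    congr 1
    rw [Measure.addHaar_ball volume b ha.le, ENNReal.toReal_mul,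
      ENNReal.toReal_ofReal (by positivity), ← hV, finrank_euclideanSpace_fin]
  have hexp : a ^ δ * a ^ (-(n:ℝ)/2) * a ^ (n:ℕ) = a ^ ((n:ℝ)/2 + δ) := by
    rw [← Real.rpow_natCast a n, ← Real.rpow_add ha, ← Real.rpow_add ha]
    congr 1
    ring
  calc ‖∫ q, F q‖ ≤ M * (a ^ n * V * V) := by rw [← hvol]; exact hnorm
    _ = 2 ^ ((n:ℝ) + δ) * V ^ 2 * CK * (a ^ δ * a ^ (-(n:ℝ)/2) * a ^ (n:ℕ))
        * ‖b‖ ^ (-((n:ℝ)+δ)) := by rw [hM]; ring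
    _ = 2 ^ ((n:ℝ) + δ) * V ^ 2 * CK * a ^ ((n:ℝ)/2 + δ) * ‖b‖ ^ (-((n:ℝ)+δ)) := by
        rw [hexp]

end
end

section
/- Let n ≥ 1 and let μ be a vanishing Carleson measure on ℝ^{n+1}_+. For r > 0 and 0 < a₀ < r, set T̃(r,a₀) := {(a,b) ∈ ℝ^{n+1}_+ : |b| < r − a and a > a₀}. Then for every ε > 0 there exist r > 0 and a₀ ∈ (0,r) such that the restriction μ' of μ to ℝ^{n+1}_+ \ T̃(r,a₀) satisfies Cμ'(x) ≤ ε for every x ∈ ℝⁿ. -/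
open MeasureTheory Metric Set
open scoped ENNReal

noncomputable section

/-- log lower bound for arcosh. -/
lemma log_le_arcosh {x : ℝ} (hx : 1 ≤ x) : Real.log x ≤ arcosh x :=
  Real.log_le_log (by linarith) (le_add_of_nonneg_right (Real.sqrt_nonneg _))

lemma coord_le_norm {n : ℕ} (y : Euc n) (i : Fin n) : |y i| ≤ ‖y‖ := by
  rw [EuclideanSpace.norm_eq, ← Real.sqrt_sq_eq_abs]
  apply Real.sqrt_le_sqrt
  have := Finset.single_le_sum (f := fun j => ‖y j‖ ^ 2)
    (fun j _ => sq_nonneg _) (Finset.mem_univ i)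
  simpa [Real.norm_eq_abs, sq_abs] using this

lemma hypDist_base {n : ℕ} (a : ℝ) (b : Euc n) :
    hypDist (basePt n) (a, b) = arcosh (1 + (|1 - a| ^ 2 + ‖b‖ ^ 2) / (2 * a)) := by
  simp only [hypDist, basePt]
  norm_num

set_option maxHeartbeats 2000000 in
/-- for a vanishing Carleson measure μ, the Carleson box function of the
restriction of μ to the complement of a truncated tent T̃(r,a₀) can be made uniformly small. -/
theorem statement14 (n : ℕ) (hn : 1 ≤ n) (μ : Measure (ℝ × Euc n))
    (hsupp : μ {p : ℝ × Euc n | p.1 ≤ 0} = 0) (hμ : IsVanishingCarleson μ) :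
    ∀ ε : ℝ, 0 < ε → ∃ r a₀ : ℝ, 0 < a₀ ∧ a₀ < r ∧ ∀ x : Euc n,
      carlesonSup (μ.restrict ({p : ℝ × Euc n | 0 < p.1 ∧ ‖p.2‖ < r - p.1 ∧ a₀ < p.1}ᶜ)) x
        ≤ ENNReal.ofReal ε := by
  intro ε hε
  obtain ⟨-, hvan⟩ := hμ
  have hnR : (1:ℝ) ≤ (n:ℝ) := by exact_mod_cast hn
  set Cn : ℝ := (4 * ((n:ℝ) + 2)) ^ n with hCndef
  have hCn1 : (1:ℝ) ≤ Cn := one_le_pow₀ (by linarith)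
  have hCn0 : (0:ℝ) < Cn := lt_of_lt_of_le one_pos hCn1
  set ε' : ℝ := ε / Cn with hε'def
  have hε' : 0 < ε' := div_pos hε hCn0
  have hε'le : ε' ≤ ε := div_le_self hε.le hCn1
  obtain ⟨R₀, hR₀⟩ := hvan ε' hε'
  set R : ℝ := max R₀ 1 with hRdef
  have hR1 : (1:ℝ) ≤ R := le_max_right _ _
  have hvan' : ∀ p : ℝ × Euc n, 0 < p.1 → R ≤ hypDist (basePt n) p →
      μ (tent p.2 p.1) ≤ ENNReal.ofReal ε' * volume (ball p.2 p.1) := by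
    intro p h1 h2
    exact hR₀ p ⟨h1, le_trans (le_max_left _ _) h2⟩
  set E : ℝ := Real.exp R with hEdef
  have hE : 1 ≤ E := Real.one_le_exp (by linarith)
  set a₀ : ℝ := 1 / (8 * ((n:ℝ) + 2) * E) with ha₀def
  have ha₀ : 0 < a₀ := by rw [ha₀def]; positivity
  set τ : ℝ := ((n:ℝ) + 2) * a₀ with hτdef
  have hτpos : 0 < τ := by rw [hτdef]; positivity
  have hτE : τ * (8 * E) = 1 := by
    rw [hτdef, ha₀def]; field_simp
  have hτ8 : τ ≤ 1 / 8 := by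
    rw [le_div_iff₀ (by norm_num : (0:ℝ) < 8)]
    nlinarith
  -- farness of low points
  have hlow : ∀ (a : ℝ) (b : Euc n), 0 < a → a ≤ τ → R ≤ hypDist (basePt n) (a, b) := by
    intro a b ha haτ
    rw [hypDist_base]
    have hx0 : (0:ℝ) < 1 + (|1 - a| ^ 2 + ‖b‖ ^ 2) / (2 * a) := by positivity
    have hx1 : (1:ℝ) ≤ 1 + (|1 - a| ^ 2 + ‖b‖ ^ 2) / (2 * a) := by
      have : 0 ≤ (|1 - a| ^ 2 + ‖b‖ ^ 2) / (2 * a) := by positivity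
      linarith
    refine le_trans ?_ (log_le_arcosh hx1)
    rw [Real.le_log_iff_exp_le hx0, ← hEdef]
    have ha8 : a ≤ 1/8 := haτ.trans hτ8
    have habs : |1 - a| = 1 - a := abs_of_nonneg (by linarith)
    have hkey : (E - 1) * (2 * a) ≤ |1 - a| ^ 2 + ‖b‖ ^ 2 := by
      rw [habs]
      have h2 : a * (8 * E) ≤ 1 := by
        have := hτE
        nlinarith [mul_le_mul_of_nonneg_right haτ (by positivity : (0:ℝ) ≤ 8 * E)]
      nlinarith [norm_nonneg b, sq_nonneg (1 - a), sq_nonneg ‖b‖]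
    have := (le_div_iff₀ (by positivity : (0:ℝ) < 2 * a)).2 hkey
    linarith
  set M : ℝ := 2 + 2 * E with hMdef
  have hM : 2 ≤ M := by nlinarith
  set r : ℝ := 3 * M with hrdef
  refine ⟨r, a₀, ha₀, by nlinarith [ha₀, hE], ?_⟩
  intro x
  set T : Set (ℝ × Euc n) := {p : ℝ × Euc n | 0 < p.1 ∧ ‖p.2‖ < r - p.1 ∧ a₀ < p.1} with hTdef
  have hTmeas : MeasurableSet Tᶜ := by
    have h1 : IsOpen {p : ℝ × Euc n | 0 < p.1} := isOpen_lt continuous_const continuous_fst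
    have h2 : IsOpen {p : ℝ × Euc n | ‖p.2‖ < r - p.1} :=
      isOpen_lt continuous_snd.norm (continuous_const.sub continuous_fst)
    have h3 : IsOpen {p : ℝ × Euc n | a₀ < p.1} := isOpen_lt continuous_const continuous_fst
    have : T = {p : ℝ × Euc n | 0 < p.1} ∩ ({p : ℝ × Euc n | ‖p.2‖ < r - p.1} ∩ {p : ℝ × Euc n | a₀ < p.1}) := by
      rw [hTdef]; ext p; simp [Set.mem_setOf_eq, and_assoc]
    exact (this ▸ (h1.inter (h2.inter h3))).measurableSet.compl
  haveI : Nontrivial (Euc n) := by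
    apply Module.nontrivial_of_finrank_pos (R := ℝ)
    rw [finrank_euclideanSpace_fin]; omega
  set ν : ℝ≥0∞ := volume (ball (0 : Euc n) 1) with hνdef
  -- the key covering estimate
  have hcover : ∀ (c : Euc n) (ρ : ℝ), τ < ρ →
      μ {q : ℝ × Euc n | 0 < q.1 ∧ q.1 ≤ a₀ ∧ ‖c - q.2‖ < ρ - q.1}
        ≤ ENNReal.ofReal ε * volume (ball c ρ) := by
    intro c ρ hρτ'
    have hρ : 0 < ρ := hτpos.trans hρτ'
    set K : ℤ := ⌈ρ / a₀⌉ + 1 with hKdef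
    have hKρ : ρ / a₀ + 1 ≤ (K:ℝ) := by
      rw [hKdef]; push_cast; linarith [Int.le_ceil (ρ / a₀)]
    have hK2 : (K:ℝ) ≤ ρ / a₀ + 2 := by
      rw [hKdef]; push_cast; linarith [Int.ceil_lt_add_one (ρ / a₀)]
    have hρa : 3 ≤ ρ / a₀ := by
      rw [le_div_iff₀ ha₀]
      have h3τ : 3 * a₀ ≤ τ := by rw [hτdef]; nlinarith
      linarith
    set box : Finset (Fin n → ℤ) := Fintype.piFinset (fun _ => Finset.Icc (-K) K) with hbox
    set ctr : (Fin n → ℤ) → Euc n :=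
      fun z => c + a₀ • (WithLp.equiv 2 (Fin n → ℝ)).symm (fun i => ((z i : ℤ) : ℝ)) with hctr
    have hsub : {q : ℝ × Euc n | 0 < q.1 ∧ q.1 ≤ a₀ ∧ ‖c - q.2‖ < ρ - q.1} ⊆
        ⋃ z ∈ box, tent (ctr z) τ := by
      rintro q ⟨hq1, hq2, hq3⟩
      set y : Euc n := q.2 - c with hy
      set z : Fin n → ℤ := fun i => round (y i / a₀) with hz
      have hyn : ‖y‖ < ρ := by
        rw [hy, norm_sub_rev]
        linarith
      have hzi : ∀ i, |y i - a₀ * ((z i : ℤ) : ℝ)| ≤ a₀ / 2 := by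
        intro i
        have h := abs_sub_round (y i / a₀)
        have heq : y i - a₀ * ((z i : ℤ) : ℝ) = a₀ * (y i / a₀ - ((z i : ℤ) : ℝ)) := by
          field_simp
        calc |y i - a₀ * ((z i : ℤ) : ℝ)| = a₀ * |y i / a₀ - ((z i : ℤ) : ℝ)| := by
              rw [heq, abs_mul, abs_of_pos ha₀]
        _ ≤ a₀ * (1/2) := mul_le_mul_of_nonneg_left h ha₀.le
        _ = a₀ / 2 := by ring
      have hzbox : z ∈ box := by
        rw [hbox, Fintype.mem_piFinset]
        intro i
        rw [Finset.mem_Icc, ← abs_le]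
        have h1 : |y i| ≤ ‖y‖ := coord_le_norm y i
        have h3 : |((z i : ℤ) : ℝ)| ≤ |((z i : ℤ) : ℝ) - y i / a₀| + |y i / a₀| := by
          have := abs_add_le (((z i : ℤ) : ℝ) - y i / a₀) (y i / a₀)
          rwa [sub_add_cancel] at this
        have h4 : |((z i : ℤ) : ℝ) - y i / a₀| ≤ 1/2 := by
          rw [abs_sub_comm]; exact abs_sub_round (y i / a₀)
        have h5 : |y i / a₀| ≤ ρ / a₀ := by
          rw [abs_div, abs_of_pos ha₀]
          exact (div_le_div_iff_of_pos_right ha₀).2 (by linarith)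
        have h6 : |((z i : ℤ) : ℝ)| ≤ (K:ℝ) := by linarith
        exact_mod_cast h6
      refine Set.mem_biUnion hzbox ?_
      have hcoord : ∀ i, (ctr z - q.2) i = a₀ * ((z i : ℤ) : ℝ) - y i := by
        intro i
        rw [hctr, hy]
        simp only [PiLp.sub_apply, PiLp.add_apply, PiLp.smul_apply,
          WithLp.equiv_symm_apply, PiLp.toLp_apply, smul_eq_mul]
        ring
      have hnorm : ‖ctr z - q.2‖ ≤ (n:ℝ) * a₀ := by
        rw [EuclideanSpace.norm_eq]
        have hsum : ∑ i, ‖(ctr z - q.2) i‖ ^ 2 ≤ (n:ℝ) * (a₀/2)^2 := by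
          have hterm : ∀ i ∈ Finset.univ, ‖(ctr z - q.2) i‖ ^ 2 ≤ (a₀/2)^2 := by
            intro i _
            rw [hcoord i, Real.norm_eq_abs]
            have h := hzi i
            rw [abs_sub_comm] at h
            exact pow_le_pow_left₀ (abs_nonneg _) h 2
          calc ∑ i, ‖(ctr z - q.2) i‖ ^ 2 ≤ ∑ _i : Fin n, (a₀/2)^2 :=
                Finset.sum_le_sum hterm
          _ = (n:ℝ) * (a₀/2)^2 := by
                rw [Finset.sum_const, Finset.card_univ, Fintype.card_fin, nsmul_eq_mul]
        calc Real.sqrt (∑ i, ‖(ctr z - q.2) i‖ ^ 2) ≤ Real.sqrt (((n:ℝ) * a₀)^2) := by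
              apply Real.sqrt_le_sqrt
              nlinarith [sq_nonneg a₀]
        _ = (n:ℝ) * a₀ := Real.sqrt_sq (by positivity)
      refine ⟨hq1, ?_⟩
      have : τ - q.1 ≥ ((n:ℝ) + 1) * a₀ := by rw [hτdef]; nlinarith
      have hlt : (n:ℝ) * a₀ < τ - q.1 := by nlinarith
      exact lt_of_le_of_lt hnorm hlt
    have hstep : ∀ z ∈ box, μ (tent (ctr z) τ) ≤
        ENNReal.ofReal ε' * (ENNReal.ofReal (τ ^ n) * ν) := by
      intro z _
      have h1 := hvan' (τ, ctr z) hτpos (hlow τ (ctr z) hτpos le_rfl)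
      rw [show ((τ, ctr z) : ℝ × Euc n).2 = ctr z from rfl,
        show ((τ, ctr z) : ℝ × Euc n).1 = τ from rfl] at h1
      rwa [Measure.addHaar_ball volume (ctr z) hτpos.le, finrank_euclideanSpace_fin,
        ← hνdef] at h1
    have hcard : (box.card : ℝ) ≤ (4 * ρ / a₀)^n := by
      rw [hbox, Fintype.card_piFinset]
      simp only [Int.card_Icc]
      rw [Finset.prod_const, Finset.card_univ, Fintype.card_fin]
      have hKpos : (0:ℤ) ≤ K + 1 - -K := by
        have : (1:ℝ) ≤ (K:ℝ) := by linarith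
        have : (1:ℤ) ≤ K := by exact_mod_cast this
        omega
      have h1 : (((K + 1 - -K).toNat : ℕ) : ℝ) = 2*(K:ℝ)+1 := by
        have h0 := Int.toNat_of_nonneg hKpos
        calc (((K + 1 - -K).toNat : ℕ) : ℝ) = (((K + 1 - -K).toNat : ℤ) : ℝ) := by norm_cast
        _ = ((K + 1 - -K : ℤ) : ℝ) := by rw [h0]
        _ = 2*(K:ℝ)+1 := by push_cast; ring
      rw [Nat.cast_pow]
      apply pow_le_pow_left₀ (Nat.cast_nonneg _)
      rw [h1]
      have h44 : 4*ρ/a₀ = 4*(ρ/a₀) := by ring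
      rw [h44]
      linarith
    have hfinal : (box.card : ℝ) * ε' * τ ^ n ≤ ε * ρ ^ n := by
      have hτn : (0:ℝ) ≤ τ ^ n := by positivity
      have h2 : (box.card:ℝ) * ε' * τ^n ≤ (4*ρ/a₀)^n * ε' * τ^n :=
        mul_le_mul_of_nonneg_right (mul_le_mul_of_nonneg_right hcard hε'.le) hτn
      have h3 : (4*ρ/a₀)^n * τ^n = Cn * ρ^n := by
        rw [hCndef, ← mul_pow, ← mul_pow]
        congr 1
        rw [hτdef]
        field_simp
      have h4 : ε' * Cn = ε := by
        rw [hε'def]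
        field_simp
      calc (box.card:ℝ) * ε' * τ^n ≤ (4*ρ/a₀)^n * ε' * τ^n := h2
      _ = ε' * ((4*ρ/a₀)^n * τ^n) := by ring
      _ = ε' * (Cn * ρ^n) := by rw [h3]
      _ = ε * ρ^n := by rw [← mul_assoc, h4]
    calc μ {q : ℝ × Euc n | 0 < q.1 ∧ q.1 ≤ a₀ ∧ ‖c - q.2‖ < ρ - q.1}
        ≤ μ (⋃ z ∈ box, tent (ctr z) τ) := measure_mono hsub
    _ ≤ ∑ z ∈ box, μ (tent (ctr z) τ) := measure_biUnion_finset_le _ _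
    _ ≤ ∑ _z ∈ box, ENNReal.ofReal ε' * (ENNReal.ofReal (τ ^ n) * ν) :=
        Finset.sum_le_sum hstep
    _ = box.card • (ENNReal.ofReal ε' * (ENNReal.ofReal (τ ^ n) * ν)) := Finset.sum_const _
    _ = ((box.card : ℝ≥0∞) * ENNReal.ofReal ε' * ENNReal.ofReal (τ ^ n)) * ν := by
        rw [nsmul_eq_mul]; ring
    _ = ENNReal.ofReal ((box.card:ℝ) * ε' * τ^n) * ν := by
        rw [ENNReal.ofReal_mul (mul_nonneg (Nat.cast_nonneg _) hε'.le),
          ENNReal.ofReal_mul (Nat.cast_nonneg _), ENNReal.ofReal_natCast]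
    _ ≤ ENNReal.ofReal (ε * ρ^n) * ν := mul_le_mul_left (ENNReal.ofReal_le_ofReal hfinal) ν
    _ = ENNReal.ofReal ε * volume (ball c ρ) := by
        rw [Measure.addHaar_ball volume c hρ.le, finrank_euclideanSpace_fin, ← hνdef,
          ENNReal.ofReal_mul hε.le, mul_assoc]
  refine iSup₂_le fun p hp => ?_
  apply ENNReal.div_le_of_le_mul
  rw [Measure.restrict_apply' hTmeas]
  by_cases hfar : R ≤ hypDist (basePt n) p
  · refine le_trans (measure_mono Set.inter_subset_left) (le_trans (hvan' p hp.1 hfar) ?_)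
    exact mul_le_mul_left (ENNReal.ofReal_le_ofReal hε'le) _
  · push_neg at hfar
    have hρτ : τ < p.1 := by
      by_contra h
      push_neg at h
      have := hlow p.1 p.2 hp.1 h
      rw [Prod.mk.eta] at this
      linarith
    -- apex bounds in the near case
    have hnear : p.1 < M ∧ ‖p.2‖ < M := by
      have hρ := hp.1
      rw [← Prod.mk.eta (p := p), hypDist_base] at hfar
      have hx0 : (0:ℝ) < 1 + (|1 - p.1| ^ 2 + ‖p.2‖ ^ 2) / (2 * p.1) := by positivity
      have hx1 : (1:ℝ) ≤ 1 + (|1 - p.1| ^ 2 + ‖p.2‖ ^ 2) / (2 * p.1) := by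
        have : 0 ≤ (|1 - p.1| ^ 2 + ‖p.2‖ ^ 2) / (2 * p.1) := by positivity
        linarith
      have hXE : 1 + (|1 - p.1| ^ 2 + ‖p.2‖ ^ 2) / (2 * p.1) < E := by
        rw [hEdef]
        exact (Real.log_lt_iff_lt_exp hx0).1 (lt_of_le_of_lt (log_le_arcosh hx1) hfar)
      have hkey : |1 - p.1| ^ 2 + ‖p.2‖ ^ 2 < (E - 1) * (2 * p.1) := by
        have := (div_lt_iff₀ (by positivity : (0:ℝ) < 2 * p.1)).1
          (by linarith : (|1 - p.1| ^ 2 + ‖p.2‖ ^ 2) / (2 * p.1) < E - 1)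
        linarith
      have h2 : (1 - p.1) ^ 2 = |1 - p.1| ^ 2 := (sq_abs _).symm
      have hρM : p.1 < M := by
        by_contra h
        push_neg at h
        have h3 : M * p.1 ≤ p.1 * p.1 := mul_le_mul_of_nonneg_right h hρ.le
        nlinarith [sq_nonneg ‖p.2‖]
      refine ⟨hρM, ?_⟩
      by_contra h
      push_neg at h
      have h4 : M * M ≤ ‖p.2‖ * ‖p.2‖ := mul_le_mul h h (by nlinarith) (norm_nonneg _)
      nlinarith [sq_nonneg (1 - p.1)]
    have hsub : tent p.2 p.1 ∩ Tᶜ ⊆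
        {q : ℝ × Euc n | 0 < q.1 ∧ q.1 ≤ a₀ ∧ ‖p.2 - q.2‖ < p.1 - q.1} := by
      rintro q ⟨⟨hq1, hq2⟩, hq3⟩
      refine ⟨hq1, ?_, hq2⟩
      have hqnorm : ‖q.2‖ < r - q.1 := by
        have h1 := norm_add_le (q.2 - p.2) p.2
        rw [sub_add_cancel, norm_sub_rev] at h1
        have := hnear.1; have := hnear.2
        rw [hrdef]
        linarith
      by_contra h
      push_neg at h
      exact hq3 ⟨hq1, hqnorm, h⟩
    exact le_trans (measure_mono hsub) (hcover p.2 p.1 hρτ)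

end
end
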